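/- arXiv:2410.04189 — 3 statements merged into one kernel-verified Lean document; each statement's English description precedes it below -/
import Mathlib

section
/- There is an absolute constant c > 0 such that the following holds. Let δ ∈ (0,1), let N be a positive integer and T ≥ 1 a real, let f : ℤ → ℂ be 1-bounded and supported on [−N, N], and let μ be a probability measure on ℤ supported on [−N, N] with ∑_x μ(x)² ≤ T/N. If ‖f‖_{U_GP[N;μ]}² ≥ δ, then ‖f‖_{U²[N]} ≥ c·(δ²/T)^{1/4}. -/
noncomputable section
open scoped Classical

/-- A probability measure on `ℤ`: a finitely supported function into `[0,1]` of total mass one. -/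
def IsProbMeasure (μ : ℤ → ℝ) : Prop :=
  (Function.support μ).Finite ∧ (∀ x, 0 ≤ μ x) ∧ (∀ x, μ x ≤ 1) ∧ ∑' x : ℤ, μ x = 1

/-- The Gowers–Peluse inner product `⟨(F_ω)_ω⟩_{U_GP[N; μ_i]}`, written via the standard
expansion of the iterated difference operators `Δ_{(h_i, h_i')}`: the factor indexed by
`ω` is conjugated when `|ω|` is odd and shifted by `h_i` or `h_i'` according to `ω_i`. -/
def gpInner {ι : Type} [Fintype ι] (N : ℝ) (μ : ι → ℤ → ℝ)
    (F : (ι → Bool) → ℤ → ℂ) : ℂ :=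
  (N : ℂ)⁻¹ * ∑' x : ℤ, ∑' h : ι → ℤ, ∑' h' : ι → ℤ,
    ((∏ i, (μ i (h i) * μ i (h' i)) : ℝ) : ℂ) *
      ∏ ω : ι → Bool,
        (if Even (Finset.univ.filter (fun i => ω i = true)).card
          then F ω (x + ∑ i, if ω i then h' i else h i)
          else (starRingEnd ℂ) (F ω (x + ∑ i, if ω i then h' i else h i)))

/-- `‖f‖_{U_GP[N; μ₁,…,μ_k]}^{2^k}`, as a real number. -/
def gpSq {ι : Type} [Fintype ι] (N : ℝ) (μ : ι → ℤ → ℝ) (f : ℤ → ℂ) : ℝ :=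
  (gpInner N μ (fun _ => f)).re

/-- The Gowers–Peluse norm `‖f‖_{U_GP[N; μ₁,…,μ_k]}`. -/
def gpNorm {ι : Type} [Fintype ι] (N : ℝ) (μ : ι → ℤ → ℝ) (f : ℤ → ℂ) : ℝ :=
  gpSq N μ f ^ ((1 : ℝ) / 2 ^ (Fintype.card ι))

/-- `‖f‖_{U^k(ℤ)}^{2^k}` (as a complex number), via the standard expansion of
`Δ_{h₁} ⋯ Δ_{h_k} f`. -/
def gowersD (k : ℕ) (f : ℤ → ℂ) : ℂ :=
  ∑' x : ℤ, ∑' h : Fin k → ℤ,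
    ∏ ω : Fin k → Bool,
      (if Even (Finset.univ.filter (fun i => ω i = true)).card
        then f (x + ∑ i, if ω i then h i else 0)
        else (starRingEnd ℂ) (f (x + ∑ i, if ω i then h i else 0)))

/-- The indicator function of `{1, …, ⌊N⌋}` in `ℤ`. -/
def boxInd (N : ℝ) (m : ℤ) : ℂ := if 1 ≤ m ∧ (m : ℝ) ≤ N then 1 else 0

/-- The normalised Gowers norm `‖f‖_{U^k[N]}`. -/
def gowersNorm (k : ℕ) (N : ℝ) (f : ℤ → ℂ) : ℝ :=
  (gowersD k f).re ^ ((1 : ℝ) / 2 ^ k) / (gowersD k (boxInd N)).re ^ ((1 : ℝ) / 2 ^ k)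

-- ## auxiliary lemmas


lemma prodBool1 (G : (Fin 1 → Bool) → ℂ) : ∏ ω, G ω = G (fun _ => false) * G (fun _ => true) := by
  rw [← (Equiv.funUnique (Fin 1) Bool).symm.prod_comp]
  have h : ∀ b : Bool, (Equiv.funUnique (Fin 1) Bool).symm b = fun _ => b := by
    intro b; funext i; rfl
  simp [h, mul_comm]

lemma prodBool2 (G : (Fin 2 → Bool) → ℂ) : ∏ ω, G ω =
    G ![false,false] * G ![true,false] * G ![false,true] * G ![true,true] := by
  rw [← (finTwoArrowEquiv Bool).symm.prod_comp]
  rw [Fintype.prod_prod_type]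
  simp [finTwoArrowEquiv, mul_assoc, mul_comm, mul_left_comm]

lemma key1 (f : ℤ → ℂ) (x a b : ℤ) :
    (∏ ω : Fin 1 → Bool,
        if Even (Finset.univ.filter (fun i => ω i = true)).card
          then f (x + ∑ i : Fin 1, if ω i then b else a)
          else (starRingEnd ℂ) (f (x + ∑ i : Fin 1, if ω i then b else a)))
      = f (x + a) * (starRingEnd ℂ) (f (x + b)) := by
  rw [prodBool1]
  simp

lemma gpInner_one (N : ℝ) (μ : ℤ → ℝ) (f : ℤ → ℂ) :
    gpInner N (fun _ : Fin 1 => μ) (fun _ => f)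
      = (N:ℂ)⁻¹ * ∑' x : ℤ, ∑' a : ℤ, ∑' b : ℤ,
          ((μ a * μ b : ℝ) : ℂ) * (f (x+a) * (starRingEnd ℂ) (f (x+b))) := by
  unfold gpInner
  congr 1
  refine tsum_congr fun x => ?_
  rw [← (Equiv.funUnique (Fin 1) ℤ).symm.tsum_eq]
  refine tsum_congr fun a => ?_
  rw [← (Equiv.funUnique (Fin 1) ℤ).symm.tsum_eq]
  refine tsum_congr fun b => ?_
  have ha : ∀ z : ℤ, (Equiv.funUnique (Fin 1) ℤ).symm z = fun _ => z := fun z => rfl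
  rw [ha, ha]
  congr 1
  · norm_cast
    simp
  · convert key1 f x a b using 2
    exact congrArg (fun i => @Finset.univ (Fin 1 → Bool) i) (Subsingleton.elim _ _)

lemma key2 (f : ℤ → ℂ) (x a b : ℤ) :
    (∏ ω : Fin 2 → Bool,
        if Even (Finset.univ.filter (fun i => ω i = true)).card
          then f (x + ∑ i : Fin 2, if ω i then (![a,b] : Fin 2 → ℤ) i else 0)
          else (starRingEnd ℂ) (f (x + ∑ i : Fin 2, if ω i then (![a,b] : Fin 2 → ℤ) i else 0)))
      = f x * (starRingEnd ℂ) (f (x+a)) * (starRingEnd ℂ) (f (x+b)) * f (x+(a+b)) := by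
  rw [prodBool2]
  have h00 : Even ((Finset.univ.filter (fun i : Fin 2 => (![false,false] : Fin 2 → Bool) i = true)).card) := by
    have : (Finset.univ.filter (fun i : Fin 2 => (![false,false] : Fin 2 → Bool) i = true)) = ∅ := by
      ext i; fin_cases i <;> simp
    simp [this]
  have h10 : ¬ Even ((Finset.univ.filter (fun i : Fin 2 => (![true,false] : Fin 2 → Bool) i = true)).card) := by
    have : (Finset.univ.filter (fun i : Fin 2 => (![true,false] : Fin 2 → Bool) i = true)) = {0} := by
      ext i; fin_cases i <;> simp
    simp [this]
  have h01 : ¬ Even ((Finset.univ.filter (fun i : Fin 2 => (![false,true] : Fin 2 → Bool) i = true)).card) := by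
    have : (Finset.univ.filter (fun i : Fin 2 => (![false,true] : Fin 2 → Bool) i = true)) = {1} := by
      ext i; fin_cases i <;> simp
    simp [this]
  have h11 : Even ((Finset.univ.filter (fun i : Fin 2 => (![true,true] : Fin 2 → Bool) i = true)).card) := by
    have : (Finset.univ.filter (fun i : Fin 2 => (![true,true] : Fin 2 → Bool) i = true)) = Finset.univ := by
      ext i; fin_cases i <;> simp
    simp [this]
  rw [if_pos h00, if_neg h10, if_neg h01, if_pos h11]
  simp [Fin.sum_univ_two]

lemma gowersD_two (f : ℤ → ℂ) :
    gowersD 2 f = ∑' x : ℤ, ∑' p : ℤ × ℤ,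
      f x * (starRingEnd ℂ) (f (x+p.1)) * (starRingEnd ℂ) (f (x+p.2)) * f (x+(p.1+p.2)) := by
  unfold gowersD
  refine tsum_congr fun x => ?_
  rw [← (finTwoArrowEquiv ℤ).symm.tsum_eq]
  refine tsum_congr fun p => ?_
  convert key2 f x p.1 p.2 using 2
  rfl

-- ## finset helpers

lemma sum_shift {M : Type*} [AddCommMonoid M] (g : ℤ → M) (lo hi x : ℤ) :
    ∑ y ∈ Finset.Icc (x+lo) (x+hi), g y = ∑ a ∈ Finset.Icc lo hi, g (x + a) := by
  rw [← Finset.map_add_left_Icc, Finset.sum_map]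
  simp [addLeftEmbedding_apply]

lemma sum_supported {M : Type*} [AddCommMonoid M] {g : ℤ → M} {I s : Finset ℤ} (hIs : I ⊆ s)
    (hg : ∀ y ∉ I, g y = 0) : ∑ y ∈ s, g y = ∑ y ∈ I, g y :=
  (Finset.sum_subset hIs fun y _ hy => hg y hy).symm

lemma mem_Icc_abs {n : ℕ} {x : ℤ} : x ∈ Finset.Icc (-(n:ℤ)) n ↔ |x| ≤ (n:ℤ) := by
  rw [Finset.mem_Icc, abs_le]

lemma re_le_norm (z : ℂ) : z.re ≤ ‖z‖ := by
  exact Complex.re_le_norm z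

lemma norm_sq_term (z : ℂ) : z * (starRingEnd ℂ) z = ((‖z‖^2 : ℝ) : ℂ) := by
  rw [Complex.mul_conj]
  norm_cast
  rw [← Complex.sq_norm]

-- ## gpSq in finset form

lemma gpSq_eq (n : ℕ) (f : ℤ → ℂ) (μ : ℤ → ℝ)
    (hf : ∀ x, f x ≠ 0 → |x| ≤ (n:ℤ)) (hμ : ∀ x, μ x ≠ 0 → |x| ≤ (n:ℤ)) :
    gpSq (n:ℝ) (fun _ : Fin 1 => μ) f
      = (n:ℝ)⁻¹ * ∑ x ∈ Finset.Icc (-(2*n:ℤ)) (2*n),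
          ‖∑ a ∈ Finset.Icc (-(n:ℤ)) n, (μ a : ℂ) * f (x+a)‖^2 := by
  have hf0 : ∀ x : ℤ, x ∉ Finset.Icc (-(n:ℤ)) n → f x = 0 := by
    intro x hx; by_contra h
    exact hx (mem_Icc_abs.mpr (hf x h))
  have hμ0 : ∀ x : ℤ, x ∉ Finset.Icc (-(n:ℤ)) n → μ x = 0 := by
    intro x hx; by_contra h
    exact hx (mem_Icc_abs.mpr (hμ x h))
  set I := Finset.Icc (-(n:ℤ)) n with hI
  set B := Finset.Icc (-(2*n:ℤ)) (2*n) with hB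
  set g : ℤ → ℂ := fun x => ∑ a ∈ I, (μ a:ℂ) * f (x+a) with hg
  have step1 : ∀ x : ℤ,
      (∑' a : ℤ, ∑' b : ℤ, ((μ a * μ b : ℝ):ℂ) * (f (x+a) * (starRingEnd ℂ) (f (x+b))))
        = g x * (starRingEnd ℂ) (g x) := by
    intro x
    have expand : g x * (starRingEnd ℂ) (g x)
        = ∑ a ∈ I, ∑ b ∈ I, ((μ a * μ b : ℝ):ℂ) * (f (x+a) * (starRingEnd ℂ) (f (x+b))) := by
      rw [hg]
      simp only [map_sum]
      rw [Finset.sum_mul_sum]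
      refine Finset.sum_congr rfl fun a _ => Finset.sum_congr rfl fun b _ => ?_
      rw [map_mul, Complex.conj_ofReal]
      push_cast
      ring
    calc (∑' a : ℤ, ∑' b : ℤ, ((μ a * μ b : ℝ):ℂ) * (f (x+a) * (starRingEnd ℂ) (f (x+b))))
        = ∑' a : ℤ, ∑ b ∈ I, ((μ a * μ b : ℝ):ℂ) * (f (x+a) * (starRingEnd ℂ) (f (x+b))) := by
          refine tsum_congr fun a => tsum_eq_sum fun b hb => ?_
          rw [hμ0 b hb]; push_cast; ring
      _ = ∑ a ∈ I, ∑ b ∈ I, ((μ a * μ b : ℝ):ℂ) * (f (x+a) * (starRingEnd ℂ) (f (x+b))) := by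
          refine tsum_eq_sum fun a ha => Finset.sum_eq_zero fun b _ => ?_
          rw [hμ0 a ha]; push_cast; ring
      _ = g x * (starRingEnd ℂ) (g x) := expand.symm
  unfold gpSq
  rw [gpInner_one]
  rw [tsum_congr step1]
  have hgz : ∀ x : ℤ, x ∉ B → g x * (starRingEnd ℂ) (g x) = 0 := by
    intro x hx
    have : g x = 0 := by
      rw [hg]
      refine Finset.sum_eq_zero fun a ha => ?_
      have h1 := abs_le.mp (mem_Icc_abs.mp ha)
      have h2 : ¬ ((-(2*n:ℤ)) ≤ x ∧ x ≤ (2*n:ℤ)) := by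
        intro h; exact hx (Finset.mem_Icc.mpr h)
      have : f (x + a) = 0 := by
        apply hf0
        rw [mem_Icc_abs]
        intro h
        have h3 := abs_le.mp h
        exact h2 ⟨by omega, by omega⟩
      rw [this, mul_zero]
    rw [this, map_zero, mul_zero]
  rw [tsum_eq_sum hgz]
  rw [Finset.sum_congr rfl fun x _ => norm_sq_term (g x)]
  rw [← Complex.ofReal_sum]
  rw [show (((n:ℝ)):ℂ)⁻¹ = (((n:ℝ)⁻¹ : ℝ) : ℂ) by rw [Complex.ofReal_inv]]
  rw [← Complex.ofReal_mul, Complex.ofReal_re]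

-- ## gowersD 2 in correlation form

lemma gowersD_corr (n : ℕ) (f : ℤ → ℂ) (hf : ∀ x, f x ≠ 0 → |x| ≤ (n:ℤ)) :
    (gowersD 2 f).re = ∑ t ∈ Finset.Icc (-(2*n:ℤ)) (2*n),
      ‖∑ x ∈ Finset.Icc (-(n:ℤ)) n, f x * (starRingEnd ℂ) (f (x+t))‖^2 := by
  have hf0 : ∀ x : ℤ, x ∉ Finset.Icc (-(n:ℤ)) n → f x = 0 := by
    intro x hx; by_contra h
    exact hx (mem_Icc_abs.mpr (hf x h))
  have hout : ∀ (x y : ℤ), x ∈ Finset.Icc (-(n:ℤ)) n → y ∉ Finset.Icc (-(2*n:ℤ)) (2*n) →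
      f (x+y) = 0 := by
    intro x y hx hy
    apply hf0
    intro hmem
    apply hy
    have h1 := Finset.mem_Icc.mp hx
    have h2 := Finset.mem_Icc.mp hmem
    exact Finset.mem_Icc.mpr ⟨by omega, by omega⟩
  have main : gowersD 2 f = ∑ a ∈ Finset.Icc (-(2*n:ℤ)) (2*n),
      (∑ x ∈ Finset.Icc (-(n:ℤ)) n, f x * (starRingEnd ℂ) (f (x+a)))
        * (starRingEnd ℂ) (∑ x ∈ Finset.Icc (-(n:ℤ)) n, f x * (starRingEnd ℂ) (f (x+a))) := by
    rw [gowersD_two]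
    have h1 : ∀ x : ℤ, x ∉ Finset.Icc (-(n:ℤ)) n →
        (∑' p : ℤ×ℤ, f x * (starRingEnd ℂ) (f (x+p.1)) * (starRingEnd ℂ) (f (x+p.2))
          * f (x+(p.1+p.2))) = 0 := by
      intro x hx
      rw [hf0 x hx]
      simp
    rw [tsum_eq_sum (s := Finset.Icc (-(n:ℤ)) n) h1]
    calc
      ∑ x ∈ Finset.Icc (-(n:ℤ)) n, (∑' p : ℤ×ℤ, f x * (starRingEnd ℂ) (f (x+p.1))
          * (starRingEnd ℂ) (f (x+p.2)) * f (x+(p.1+p.2)))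
        = ∑ x ∈ Finset.Icc (-(n:ℤ)) n,
            ∑ p ∈ (Finset.Icc (-(2*n:ℤ)) (2*n)) ×ˢ (Finset.Icc (-(2*n:ℤ)) (2*n)),
            f x * (starRingEnd ℂ) (f (x+p.1)) * (starRingEnd ℂ) (f (x+p.2))
              * f (x+(p.1+p.2)) := by
          refine Finset.sum_congr rfl fun x hx => tsum_eq_sum fun p hp => ?_
          have : p.1 ∉ Finset.Icc (-(2*n:ℤ)) (2*n) ∨ p.2 ∉ Finset.Icc (-(2*n:ℤ)) (2*n) := by
            by_contra hc
            push_neg at hc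
            exact hp (Finset.mem_product.mpr ⟨hc.1, hc.2⟩)
          rcases this with h | h
          · rw [hout x p.1 hx h]; simp
          · rw [hout x p.2 hx h]; simp
      _ = ∑ x ∈ Finset.Icc (-(n:ℤ)) n, ∑ a ∈ Finset.Icc (-(2*n:ℤ)) (2*n),
            ∑ b ∈ Finset.Icc (-(2*n:ℤ)) (2*n),
            f x * (starRingEnd ℂ) (f (x+a)) * (starRingEnd ℂ) (f (x+b)) * f (x+(a+b)) := by
          refine Finset.sum_congr rfl fun x _ => ?_
          rw [Finset.sum_product]
      _ = ∑ a ∈ Finset.Icc (-(2*n:ℤ)) (2*n), ∑ x ∈ Finset.Icc (-(n:ℤ)) n,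
            ∑ b ∈ Finset.Icc (-(2*n:ℤ)) (2*n),
            f x * (starRingEnd ℂ) (f (x+a)) * (starRingEnd ℂ) (f (x+b)) * f (x+(a+b)) :=
          Finset.sum_comm
      _ = ∑ a ∈ Finset.Icc (-(2*n:ℤ)) (2*n), ∑ x ∈ Finset.Icc (-(n:ℤ)) n,
            (f x * (starRingEnd ℂ) (f (x+a))) *
              (starRingEnd ℂ) (∑ y ∈ Finset.Icc (-(n:ℤ)) n, f y * (starRingEnd ℂ) (f (y+a))) := by
          refine Finset.sum_congr rfl fun a _ => Finset.sum_congr rfl fun x hx => ?_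
          have e1 : ∀ b : ℤ, f x * (starRingEnd ℂ) (f (x+a)) * (starRingEnd ℂ) (f (x+b))
              * f (x+(a+b))
              = (f x * (starRingEnd ℂ) (f (x+a)))
                * ((fun y => (starRingEnd ℂ) (f y) * f (y+a)) (x+b)) := by
            intro b
            simp only
            rw [show x+(a+b) = (x+b)+a by ring]
            ring
          rw [Finset.sum_congr rfl fun b _ => e1 b]
          rw [← Finset.mul_sum]
          congr 1
          have e2 : ∑ b ∈ Finset.Icc (-(2*n:ℤ)) (2*n),
              (fun y => (starRingEnd ℂ) (f y) * f (y+a)) (x+b)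
              = ∑ y ∈ Finset.Icc (x + -(2*n:ℤ)) (x + (2*n:ℤ)),
                  (starRingEnd ℂ) (f y) * f (y+a) := by
            rw [sum_shift (fun y => (starRingEnd ℂ) (f y) * f (y+a)) (-(2*n:ℤ)) (2*n) x]
          rw [e2]
          have e3 : ∑ y ∈ Finset.Icc (x + -(2*n:ℤ)) (x + (2*n:ℤ)),
              (starRingEnd ℂ) (f y) * f (y+a)
              = ∑ y ∈ Finset.Icc (-(n:ℤ)) n, (starRingEnd ℂ) (f y) * f (y+a) := by
            refine sum_supported ?_ ?_
            · intro y hy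
              have h1 := Finset.mem_Icc.mp hy
              have h2 := Finset.mem_Icc.mp hx
              exact Finset.mem_Icc.mpr ⟨by omega, by omega⟩
            · intro y hy
              rw [hf0 y hy, map_zero, zero_mul]
          rw [e3, map_sum]
          refine Finset.sum_congr rfl fun y _ => ?_
          rw [map_mul, Complex.conj_conj]
      _ = ∑ a ∈ Finset.Icc (-(2*n:ℤ)) (2*n),
            (∑ x ∈ Finset.Icc (-(n:ℤ)) n, f x * (starRingEnd ℂ) (f (x+a)))
              * (starRingEnd ℂ) (∑ x ∈ Finset.Icc (-(n:ℤ)) n, f x * (starRingEnd ℂ) (f (x+a))) := by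
          refine Finset.sum_congr rfl fun a _ => ?_
          rw [← Finset.sum_mul]
  rw [main, Complex.re_sum]
  refine Finset.sum_congr rfl fun a _ => ?_
  rw [norm_sq_term, Complex.ofReal_re]

-- ## numerator lower bound

lemma numerator_bound (n : ℕ) (hn : 0 < n) (T δ : ℝ) (hT : 1 ≤ T) (hδ : 0 < δ)
    (f : ℤ → ℂ) (hf : ∀ x, f x ≠ 0 → |x| ≤ (n:ℤ))
    (μ : ℤ → ℝ) (hμp : IsProbMeasure μ) (hμs : ∀ x, μ x ≠ 0 → |x| ≤ (n:ℤ))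
    (hμ2 : (∑' x : ℤ, μ x ^ 2) ≤ T / n)
    (hδle : δ ≤ gpSq (n : ℝ) (fun _ : Fin 1 => μ) f) :
    δ^2 * (n:ℝ)^3 / T ≤ (gowersD 2 f).re := by
  have hn' : (0:ℝ) < n := by exact_mod_cast hn
  have hT0 : (0:ℝ) < T := lt_of_lt_of_le one_pos hT
  have hf0 : ∀ x : ℤ, x ∉ Finset.Icc (-(n:ℤ)) n → f x = 0 := by
    intro x hx; by_contra h
    exact hx (mem_Icc_abs.mpr (hf x h))
  have hμ0 : ∀ x : ℤ, x ∉ Finset.Icc (-(n:ℤ)) n → μ x = 0 := by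
    intro x hx; by_contra h
    exact hx (mem_Icc_abs.mpr (hμs x h))
  have hμnn : ∀ x, 0 ≤ μ x := hμp.2.1
  rw [gowersD_corr n f hf]
  -- notation
  set C : ℤ → ℂ := fun t => ∑ x ∈ Finset.Icc (-(n:ℤ)) n, f x * (starRingEnd ℂ) (f (x+t)) with hC
  set D : ℝ := ∑ t ∈ Finset.Icc (-(2*n:ℤ)) (2*n), ‖C t‖^2 with hD
  set g : ℤ → ℂ := fun x => ∑ a ∈ Finset.Icc (-(n:ℤ)) n, (μ a:ℂ) * f (x+a) with hg
  set A : ℝ := ∑ x ∈ Finset.Icc (-(2*n:ℤ)) (2*n), ‖g x‖^2 with hA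
  -- step 1 : δ n ≤ A
  have h1 : δ * n ≤ A := by
    have h := hδle
    rw [gpSq_eq n f μ hf hμs] at h
    have h' := mul_le_mul_of_nonneg_right h (le_of_lt hn')
    calc δ * n ≤ ((n:ℝ)⁻¹ * ∑ x ∈ Finset.Icc (-(2*n:ℤ)) (2*n),
            ‖∑ a ∈ Finset.Icc (-(n:ℤ)) n, (μ a : ℂ) * f (x+a)‖^2) * n := h'
      _ = A := by rw [hA, hg]; field_simp
  -- step 2 : A as correlation sum
  have hsumBC : ∑ x ∈ Finset.Icc (-(2*n:ℤ)) (2*n), (g x * (starRingEnd ℂ) (g x))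
      = ∑ a ∈ Finset.Icc (-(n:ℤ)) n, ∑ b ∈ Finset.Icc (-(n:ℤ)) n,
          ((μ a * μ b : ℝ):ℂ) * C (b-a) := by
    have expand : ∀ x : ℤ, g x * (starRingEnd ℂ) (g x)
        = ∑ a ∈ Finset.Icc (-(n:ℤ)) n, ∑ b ∈ Finset.Icc (-(n:ℤ)) n,
            ((μ a * μ b : ℝ):ℂ) * (f (x+a) * (starRingEnd ℂ) (f (x+b))) := by
      intro x
      rw [hg]
      simp only [map_sum]
      rw [Finset.sum_mul_sum]
      refine Finset.sum_congr rfl fun a _ => Finset.sum_congr rfl fun b _ => ?_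
      rw [map_mul, Complex.conj_ofReal]
      push_cast
      ring
    rw [Finset.sum_congr rfl fun x _ => expand x]
    rw [Finset.sum_comm]
    refine Finset.sum_congr rfl fun a ha => ?_
    rw [Finset.sum_comm]
    refine Finset.sum_congr rfl fun b hb => ?_
    rw [← Finset.mul_sum]
    congr 1
    have e1 : ∀ x : ℤ, f (x+a) * (starRingEnd ℂ) (f (x+b))
        = (fun z => f z * (starRingEnd ℂ) (f (z+(b-a)))) (a+x) := by
      intro x
      simp only
      rw [show a+x = x+a by ring, show (x+a)+(b-a) = x+b by ring]
    rw [Finset.sum_congr rfl fun x _ => e1 x]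
    rw [← sum_shift (fun z => f z * (starRingEnd ℂ) (f (z+(b-a)))) (-(2*n:ℤ)) (2*n) a]
    refine sum_supported ?_ ?_
    · intro y hy
      have h1 := Finset.mem_Icc.mp hy
      have h2 := Finset.mem_Icc.mp ha
      exact Finset.mem_Icc.mpr ⟨by omega, by omega⟩
    · intro y hy
      rw [hf0 y hy, zero_mul]
  have hA2 : A = ∑ a ∈ Finset.Icc (-(n:ℤ)) n, ∑ b ∈ Finset.Icc (-(n:ℤ)) n,
      (μ a * μ b) * (C (b-a)).re := by
    rw [hA]
    have : ∀ x : ℤ, ‖g x‖^2 = (g x * (starRingEnd ℂ) (g x)).re := by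
      intro x; rw [norm_sq_term, Complex.ofReal_re]
    rw [Finset.sum_congr rfl fun x _ => this x]
    rw [← Complex.re_sum, hsumBC, Complex.re_sum]
    refine Finset.sum_congr rfl fun a _ => ?_
    rw [Complex.re_sum]
    refine Finset.sum_congr rfl fun b _ => ?_
    rw [Complex.re_ofReal_mul]
  -- step 3 : A ≤ weighted correlation norms
  have h3 : A ≤ ∑ a ∈ Finset.Icc (-(n:ℤ)) n, ∑ b ∈ Finset.Icc (-(n:ℤ)) n,
      (μ a * μ b) * ‖C (b-a)‖ := by
    rw [hA2]
    refine Finset.sum_le_sum fun a _ => Finset.sum_le_sum fun b _ => ?_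
    exact mul_le_mul_of_nonneg_left (re_le_norm _) (mul_nonneg (hμnn a) (hμnn b))
  -- Cauchy-Schwarz
  set I := Finset.Icc (-(n:ℤ)) n with hI
  have hcs := Finset.sum_mul_sq_le_sq_mul_sq (I ×ˢ I)
      (fun p => Real.sqrt (μ p.1 * μ p.2))
      (fun p => Real.sqrt (μ p.1 * μ p.2) * ‖C (p.2 - p.1)‖)
  have huv : ∀ p : ℤ × ℤ, Real.sqrt (μ p.1 * μ p.2) * (Real.sqrt (μ p.1 * μ p.2) * ‖C (p.2 - p.1)‖)
      = μ p.1 * μ p.2 * ‖C (p.2-p.1)‖ := by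
    intro p
    rw [← mul_assoc, Real.mul_self_sqrt (mul_nonneg (hμnn _) (hμnn _))]
  have hu2 : ∀ p : ℤ × ℤ, (Real.sqrt (μ p.1 * μ p.2))^2 = μ p.1 * μ p.2 := fun p =>
    Real.sq_sqrt (mul_nonneg (hμnn _) (hμnn _))
  have hv2 : ∀ p : ℤ × ℤ, (Real.sqrt (μ p.1 * μ p.2) * ‖C (p.2 - p.1)‖)^2
      = μ p.1 * μ p.2 * ‖C (p.2-p.1)‖^2 := by
    intro p
    rw [mul_pow, Real.sq_sqrt (mul_nonneg (hμnn _) (hμnn _))]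
  rw [Finset.sum_congr rfl fun p _ => huv p, Finset.sum_congr rfl fun p _ => hu2 p,
    Finset.sum_congr rfl fun p _ => hv2 p] at hcs
  -- total mass one
  have hμ1 : ∑ a ∈ I, μ a = 1 := by
    have : (∑' x : ℤ, μ x) = ∑ a ∈ I, μ a := tsum_eq_sum fun b hb => hμ0 b hb
    rw [← this]
    exact hμp.2.2.2
  have hmass : ∑ p ∈ I ×ˢ I, μ p.1 * μ p.2 = 1 := by
    rw [Finset.sum_product, ← Finset.sum_mul_sum, hμ1, one_mul]
  rw [hmass, one_mul] at hcs
  -- summability of μ²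
  have hsumm : Summable (fun x : ℤ => μ x^2) := by
    apply summable_of_ne_finset_zero (s := hμp.1.toFinset)
    intro b hb
    have : μ b = 0 := by
      by_contra h
      exact hb (hμp.1.mem_toFinset.mpr h)
    rw [this]; ring
  have hsq1 : ∑ a ∈ I, μ a^2 ≤ T/n :=
    le_trans (Summable.sum_le_tsum I (fun a _ => sq_nonneg _) hsumm) hμ2
  have hsq2 : ∀ t : ℤ, ∑ a ∈ I, μ (a+t)^2 ≤ T/n := by
    intro t
    have e : ∑ a ∈ I, μ (a+t)^2 = ∑ y ∈ Finset.Icc (t + -(n:ℤ)) (t+(n:ℤ)), μ y^2 := by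
      rw [sum_shift (fun y => μ y^2) (-(n:ℤ)) (n:ℤ) t]
      exact Finset.sum_congr rfl fun a _ => by rw [add_comm t a]
    rw [e]
    exact le_trans (Summable.sum_le_tsum _ (fun a _ => sq_nonneg _) hsumm) hμ2
  have hν : ∀ t : ℤ, ∑ a ∈ I, μ a * μ (a+t) ≤ T/n := by
    intro t
    have ha1 : ∑ a ∈ I, μ a * μ (a+t) ≤ ∑ a ∈ I, (μ a^2 + μ (a+t)^2)/2 :=
      Finset.sum_le_sum fun a _ => by nlinarith [sq_nonneg (μ a - μ (a+t))]
    have ha2 : ∑ a ∈ I, (μ a^2 + μ (a+t)^2)/2 = ((∑ a ∈ I, μ a^2) + ∑ a ∈ I, μ (a+t)^2)/2 := by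
      rw [← Finset.sum_div, Finset.sum_add_distrib]
    have := hsq2 t
    linarith [hsq1]
  -- shift the b-sum
  have hshiftb : ∀ a ∈ I, ∑ b ∈ I, μ b * ‖C (b-a)‖^2
      = ∑ t ∈ Finset.Icc (-(2*n:ℤ)) (2*n), μ (a+t) * ‖C t‖^2 := by
    intro a ha
    calc ∑ b ∈ I, μ b * ‖C (b-a)‖^2
        = ∑ y ∈ Finset.Icc (a + -(2*n:ℤ)) (a + (2*n:ℤ)), μ y * ‖C (y-a)‖^2 := by
          refine (sum_supported ?_ ?_).symm
          · intro y hy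
            have hy1 := Finset.mem_Icc.mp hy
            have ha1 := Finset.mem_Icc.mp ha
            exact Finset.mem_Icc.mpr ⟨by omega, by omega⟩
          · intro y hy
            rw [hμ0 y hy, zero_mul]
      _ = ∑ t ∈ Finset.Icc (-(2*n:ℤ)) (2*n), μ (a+t) * ‖C ((a+t)-a)‖^2 :=
          sum_shift (fun y => μ y * ‖C (y-a)‖^2) (-(2*n:ℤ)) (2*n) a
      _ = ∑ t ∈ Finset.Icc (-(2*n:ℤ)) (2*n), μ (a+t) * ‖C t‖^2 := by
          refine Finset.sum_congr rfl fun t _ => ?_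
          rw [add_sub_cancel_left]
  have hW : ∑ p ∈ I ×ˢ I, μ p.1 * μ p.2 * ‖C (p.2-p.1)‖^2 ≤ (T/n) * D := by
    rw [Finset.sum_product]
    calc ∑ a ∈ I, ∑ b ∈ I, μ a * μ b * ‖C (b-a)‖^2
        = ∑ a ∈ I, μ a * ∑ b ∈ I, μ b * ‖C (b-a)‖^2 := by
          refine Finset.sum_congr rfl fun a _ => ?_
          rw [Finset.mul_sum]
          exact Finset.sum_congr rfl fun b _ => by ring
      _ = ∑ a ∈ I, μ a * ∑ t ∈ Finset.Icc (-(2*n:ℤ)) (2*n), μ (a+t) * ‖C t‖^2 :=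
          Finset.sum_congr rfl fun a ha => by rw [hshiftb a ha]
      _ = ∑ a ∈ I, ∑ t ∈ Finset.Icc (-(2*n:ℤ)) (2*n), μ a * (μ (a+t) * ‖C t‖^2) :=
          Finset.sum_congr rfl fun a _ => Finset.mul_sum _ _ _
      _ = ∑ t ∈ Finset.Icc (-(2*n:ℤ)) (2*n), ∑ a ∈ I, μ a * (μ (a+t) * ‖C t‖^2) :=
          Finset.sum_comm
      _ = ∑ t ∈ Finset.Icc (-(2*n:ℤ)) (2*n), (∑ a ∈ I, μ a * μ (a+t)) * ‖C t‖^2 := by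
          refine Finset.sum_congr rfl fun t _ => ?_
          rw [Finset.sum_mul]
          exact Finset.sum_congr rfl fun a _ => by ring
      _ ≤ ∑ t ∈ Finset.Icc (-(2*n:ℤ)) (2*n), (T/n) * ‖C t‖^2 :=
          Finset.sum_le_sum fun t _ => mul_le_mul_of_nonneg_right (hν t) (sq_nonneg _)
      _ = (T/n) * D := by rw [hD, Finset.mul_sum]
  -- assemble
  have hA'0 : (0:ℝ) ≤ ∑ p ∈ I ×ˢ I, μ p.1 * μ p.2 * ‖C (p.2-p.1)‖ :=
    Finset.sum_nonneg fun p _ =>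
      mul_nonneg (mul_nonneg (hμnn _) (hμnn _)) (norm_nonneg _)
  have h3' : A ≤ ∑ p ∈ I ×ˢ I, μ p.1 * μ p.2 * ‖C (p.2-p.1)‖ := by
    rw [Finset.sum_product]
    exact h3
  have hδn : (0:ℝ) ≤ δ * n := le_of_lt (mul_pos hδ hn')
  have hchain : (δ*n)^2 ≤ (T/n) * D := by
    calc (δ*n)^2 ≤ (∑ p ∈ I ×ˢ I, μ p.1 * μ p.2 * ‖C (p.2-p.1)‖)^2 :=
          pow_le_pow_left₀ hδn (le_trans h1 h3') 2
      _ ≤ ∑ p ∈ I ×ˢ I, μ p.1 * μ p.2 * ‖C (p.2-p.1)‖^2 := hcs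
      _ ≤ (T/n) * D := hW
  rw [div_le_iff₀ hT0]
  have hstep := mul_le_mul_of_nonneg_right hchain (le_of_lt hn')
  have heq : ((T/n) * D) * n = D * T := by field_simp
  calc δ^2 * (n:ℝ)^3 = (δ*n)^2 * n := by ring
    _ ≤ ((T/n) * D) * n := hstep
    _ = D * T := heq

-- ## box function bounds

lemma box_bounds (n : ℕ) (hn : 0 < n) :
    0 < (gowersD 2 (boxInd (n:ℝ))).re ∧ (gowersD 2 (boxInd (n:ℝ))).re ≤ (n:ℝ)^3 := by
  have hn' : (0:ℝ) < n := by exact_mod_cast hn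
  have hsupp : ∀ x : ℤ, boxInd (n:ℝ) x ≠ 0 → |x| ≤ (n:ℤ) := by
    intro x h
    unfold boxInd at h
    split_ifs at h with hc
    · obtain ⟨h1, h2⟩ := hc
      have h2' : x ≤ (n:ℤ) := by exact_mod_cast h2
      rw [abs_le]; omega
    · exact absurd rfl h
  rw [gowersD_corr n _ hsupp]
  set br : ℤ → ℝ := fun m => if 1 ≤ m ∧ (m:ℝ) ≤ (n:ℝ) then (1:ℝ) else 0 with hbr
  have hbox : ∀ m : ℤ, boxInd (n:ℝ) m = ((br m :ℝ):ℂ) := by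
    intro m
    simp only [hbr]
    unfold boxInd
    split_ifs <;> simp
  set c : ℤ → ℝ := fun t => ∑ x ∈ Finset.Icc (-(n:ℤ)) n, br x * br (x+t) with hc
  have hCb : ∀ t : ℤ, (∑ x ∈ Finset.Icc (-(n:ℤ)) n,
      boxInd (n:ℝ) x * (starRingEnd ℂ) (boxInd (n:ℝ) (x+t))) = ((c t :ℝ):ℂ) := by
    intro t
    rw [hc, Complex.ofReal_sum]
    refine Finset.sum_congr rfl fun x _ => ?_
    rw [hbox, hbox, Complex.conj_ofReal, ← Complex.ofReal_mul]
  have hnorm : ∀ t : ℤ, ‖∑ x ∈ Finset.Icc (-(n:ℤ)) n,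
      boxInd (n:ℝ) x * (starRingEnd ℂ) (boxInd (n:ℝ) (x+t))‖^2 = c t ^2 := by
    intro t
    rw [hCb t, Complex.norm_real, Real.norm_eq_abs, sq_abs]
  rw [Finset.sum_congr rfl fun t _ => hnorm t]
  -- basic br facts
  have hbrnn : ∀ m : ℤ, 0 ≤ br m := by
    intro m; rw [hbr]; dsimp only; split_ifs <;> norm_num
  have hbrle : ∀ m : ℤ, br m ≤ 1 := by
    intro m; rw [hbr]; dsimp only; split_ifs <;> norm_num
  have hbrJ : ∀ m : ℤ, m ∉ Finset.Icc (1:ℤ) n → br m = 0 := by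
    intro m hm
    rw [hbr]; dsimp only
    split_ifs with hcond
    · exfalso
      apply hm
      refine Finset.mem_Icc.mpr ⟨hcond.1, ?_⟩
      exact_mod_cast hcond.2
    · rfl
  have hsumJ : ∑ m ∈ Finset.Icc (1:ℤ) n, br m = n := by
    have h1 : ∀ m ∈ Finset.Icc (1:ℤ) n, br m = 1 := by
      intro m hm
      obtain ⟨hm1, hm2⟩ := Finset.mem_Icc.mp hm
      rw [hbr]; dsimp only
      rw [if_pos ⟨hm1, by exact_mod_cast hm2⟩]
    rw [Finset.sum_congr rfl h1, Finset.sum_const, nsmul_eq_mul, mul_one]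
    rw [Int.card_Icc]
    norm_num
  have hbrsum_le : ∀ u : Finset ℤ, ∑ m ∈ u, br m ≤ n := by
    intro u
    have h1 : ∑ m ∈ u, br m = ∑ m ∈ u ∩ Finset.Icc (1:ℤ) n, br m :=
      (Finset.sum_subset Finset.inter_subset_left (fun x hx hx2 =>
        hbrJ x (fun hmem => hx2 (Finset.mem_inter.mpr ⟨hx, hmem⟩)))).symm
    rw [h1, ← hsumJ]
    exact Finset.sum_le_sum_of_subset_of_nonneg Finset.inter_subset_right
      (fun m _ _ => hbrnn m)
  have hc0 : ∀ t : ℤ, 0 ≤ c t := by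
    intro t; rw [hc]
    exact Finset.sum_nonneg fun x _ => mul_nonneg (hbrnn _) (hbrnn _)
  have hcn : ∀ t : ℤ, c t ≤ n := by
    intro t; rw [hc]
    calc ∑ x ∈ Finset.Icc (-(n:ℤ)) n, br x * br (x+t)
        ≤ ∑ x ∈ Finset.Icc (-(n:ℤ)) n, br x := by
          refine Finset.sum_le_sum fun x _ => ?_
          calc br x * br (x+t) ≤ br x * 1 :=
                mul_le_mul_of_nonneg_left (hbrle _) (hbrnn _)
            _ = br x := mul_one _
      _ ≤ n := hbrsum_le _
  have hsumt : ∑ t ∈ Finset.Icc (-(2*n:ℤ)) (2*n), c t ≤ (n:ℝ) * n := by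
    rw [hc]
    calc ∑ t ∈ Finset.Icc (-(2*n:ℤ)) (2*n), ∑ x ∈ Finset.Icc (-(n:ℤ)) n, br x * br (x+t)
        = ∑ x ∈ Finset.Icc (-(n:ℤ)) n, ∑ t ∈ Finset.Icc (-(2*n:ℤ)) (2*n), br x * br (x+t) :=
          Finset.sum_comm
      _ = ∑ x ∈ Finset.Icc (-(n:ℤ)) n, br x * ∑ t ∈ Finset.Icc (-(2*n:ℤ)) (2*n), br (x+t) :=
          Finset.sum_congr rfl fun x _ => (Finset.mul_sum _ _ _).symm
      _ ≤ ∑ x ∈ Finset.Icc (-(n:ℤ)) n, br x * n := by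
          refine Finset.sum_le_sum fun x _ => ?_
          refine mul_le_mul_of_nonneg_left ?_ (hbrnn x)
          have e : ∑ t ∈ Finset.Icc (-(2*n:ℤ)) (2*n), br (x+t)
              = ∑ y ∈ Finset.Icc (x + -(2*n:ℤ)) (x + (2*n:ℤ)), br y :=
            (sum_shift br (-(2*n:ℤ)) (2*n) x).symm
          rw [e]
          exact hbrsum_le _
      _ = (∑ x ∈ Finset.Icc (-(n:ℤ)) n, br x) * n := (Finset.sum_mul _ _ _).symm
      _ ≤ (n:ℝ) * n := mul_le_mul_of_nonneg_right (hbrsum_le _) (le_of_lt hn')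
  constructor
  · -- positivity
    have hc00 : c 0 = n := by
      rw [hc]
      dsimp only
      have h1 : ∀ x ∈ Finset.Icc (-(n:ℤ)) n, br x * br (x+0) = br x := by
        intro x _
        rw [add_zero]
        rw [hbr]; dsimp only
        split_ifs <;> norm_num
      rw [Finset.sum_congr rfl h1]
      have h2 : ∑ x ∈ Finset.Icc (-(n:ℤ)) n, br x = ∑ x ∈ Finset.Icc (1:ℤ) n, br x := by
        refine sum_supported ?_ hbrJ
        intro y hy
        have := Finset.mem_Icc.mp hy
        exact Finset.mem_Icc.mpr ⟨by omega, by omega⟩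
      rw [h2, hsumJ]
    have h0B : (0:ℤ) ∈ Finset.Icc (-(2*n:ℤ)) (2*n) := Finset.mem_Icc.mpr ⟨by omega, by omega⟩
    have h2 : c 0 ^ 2 ≤ ∑ t ∈ Finset.Icc (-(2*n:ℤ)) (2*n), c t ^2 := by
      simpa using Finset.single_le_sum (f := fun t => c t ^2) (fun t _ => sq_nonneg _) h0B
    have hpos : (0:ℝ) < c 0 ^2 := by rw [hc00]; positivity
    linarith
  · -- upper bound
    calc ∑ t ∈ Finset.Icc (-(2*n:ℤ)) (2*n), c t ^2
        ≤ ∑ t ∈ Finset.Icc (-(2*n:ℤ)) (2*n), (n:ℝ) * c t := by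
          refine Finset.sum_le_sum fun t _ => ?_
          rw [sq]
          exact mul_le_mul_of_nonneg_right (hcn t) (hc0 t)
      _ = (n:ℝ) * ∑ t ∈ Finset.Icc (-(2*n:ℤ)) (2*n), c t := (Finset.mul_sum _ _ _).symm
      _ ≤ (n:ℝ) * ((n:ℝ) * n) := mul_le_mul_of_nonneg_left hsumt (le_of_lt hn')
      _ = (n:ℝ)^3 := by ring

-- ## main theorem

theorem stmt_11 :
    ∃ c : ℝ, 0 < c ∧
      ∀ δ : ℝ, 0 < δ → δ < 1 → ∀ N : ℕ, 0 < N → ∀ T : ℝ, 1 ≤ T →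
        ∀ f : ℤ → ℂ, (∀ x, ‖f x‖ ≤ 1) → (∀ x : ℤ, f x ≠ 0 → |x| ≤ (N : ℤ)) →
        ∀ μ : ℤ → ℝ, IsProbMeasure μ → (∀ x : ℤ, μ x ≠ 0 → |x| ≤ (N : ℤ)) →
          (∑' x : ℤ, μ x ^ 2) ≤ T / N →
          δ ≤ gpSq (N : ℝ) (fun _ : Fin 1 => μ) f →
          c * (δ ^ 2 / T) ^ ((1 : ℝ) / 4) ≤ gowersNorm 2 (N : ℝ) f := by
  refine ⟨1, one_pos, ?_⟩
  intro δ hδ hδ1 N hN T hT f hfb hfs μ hμp hμs hμ2 hδle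
  have hn' : (0:ℝ) < N := by exact_mod_cast hN
  have hT0 : (0:ℝ) < T := lt_of_lt_of_le one_pos hT
  have hnum := numerator_bound N hN T δ hT hδ f hfs μ hμp hμs hμ2 hδle
  obtain ⟨hbpos, hble⟩ := box_bounds N hN
  have hDf0 : (0:ℝ) ≤ (gowersD 2 f).re := by
    have : (0:ℝ) ≤ δ^2 * (N:ℝ)^3 / T := by positivity
    linarith
  unfold gowersNorm
  have hexp : (1:ℝ) / 2^(2:ℕ) = 1/4 := by norm_num
  rw [hexp, one_mul]
  have hb4 : (0:ℝ) < ((gowersD 2 (boxInd (N:ℝ))).re) ^ ((1:ℝ)/4) :=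
    Real.rpow_pos_of_pos hbpos _
  rw [le_div_iff₀ hb4]
  calc (δ^2/T) ^ ((1:ℝ)/4) * ((gowersD 2 (boxInd (N:ℝ))).re) ^ ((1:ℝ)/4)
      ≤ (δ^2/T) ^ ((1:ℝ)/4) * ((N:ℝ)^3) ^ ((1:ℝ)/4) := by
        refine mul_le_mul_of_nonneg_left ?_ (Real.rpow_nonneg (by positivity) _)
        exact Real.rpow_le_rpow (le_of_lt hbpos) hble (by norm_num)
    _ = ((δ^2/T) * (N:ℝ)^3) ^ ((1:ℝ)/4) :=
        (Real.mul_rpow (by positivity) (by positivity)).symm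
    _ = (δ^2 * (N:ℝ)^3 / T) ^ ((1:ℝ)/4) := by rw [div_mul_eq_mul_div]
    _ ≤ ((gowersD 2 f).re) ^ ((1:ℝ)/4) :=
        Real.rpow_le_rpow (by positivity) hnum (by norm_num)
end
end

section
/- Let N ≥ 1 be a real, let k ≥ 1 be an integer, let f : ℤ → ℂ be 1-bounded and supported on [−N, N], and let μ₁, …, μ_k be probability measures on ℤ supported on [−N, N]. Then ‖f‖^{2^k}_{U_GP[N; μ₁,…,μ_k]} ≥ (1/(2k+3)) · ‖f‖^{2^k}_{U_GP[N; μ₁,…,μ_{k−1}]} (the right-hand side being the norm with the last measure omitted, raised to the power 2^k). -/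
noncomputable section
open scoped Classical

lemma sum_piFinset_snoc {M : Type*} [AddCommMonoid M] {k : ℕ} (s : Finset ℤ)
    (F : (Fin (k+1) → ℤ) → M) :
    ∑ h ∈ Fintype.piFinset (fun _ : Fin (k+1) => s), F h
      = ∑ a ∈ Fintype.piFinset (fun _ : Fin k => s), ∑ t ∈ s, F (Fin.snoc a t) := by
  rw [← Finset.sum_product']
  refine Finset.sum_nbij' (fun h => (Fin.init h, h (Fin.last k)))
    (fun p => Fin.snoc p.1 p.2) ?_ ?_ ?_ ?_ ?_
  · intro h hh
    simp only [Fintype.mem_piFinset] at hh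
    simp [Finset.mem_product, Fintype.mem_piFinset, Fin.init, hh]
  · intro p hp
    simp only [Finset.mem_product, Fintype.mem_piFinset] at hp
    simp only [Fintype.mem_piFinset]
    intro i
    induction i using Fin.lastCases with
    | last => simpa using hp.2
    | cast j => simpa using hp.1 j
  · intro h hh; exact Fin.snoc_init_self h
  · intro p hp; simp
  · intro h hh; rw [Fin.snoc_init_self]

lemma sum_piFinset_snoc2 {M : Type*} [AddCommMonoid M] {k : ℕ} (s : Finset ℤ)
    (F : (Fin (k+1) → ℤ) → (Fin (k+1) → ℤ) → M) :
    ∑ h ∈ Fintype.piFinset (fun _ : Fin (k+1) => s),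
      ∑ h' ∈ Fintype.piFinset (fun _ : Fin (k+1) => s), F h h'
    = ∑ a ∈ Fintype.piFinset (fun _ : Fin k => s),
        ∑ b ∈ Fintype.piFinset (fun _ : Fin k => s),
          ∑ u ∈ s, ∑ v ∈ s, F (Fin.snoc a u) (Fin.snoc b v) := by
  rw [sum_piFinset_snoc s (fun h => ∑ h' ∈ Fintype.piFinset (fun _ : Fin (k+1) => s), F h h')]
  refine Finset.sum_congr rfl fun a _ => ?_
  rw [Finset.sum_congr rfl (fun u (_ : u ∈ s) =>
    sum_piFinset_snoc s (fun h' => F (Fin.snoc a u) h'))]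
  exact Finset.sum_comm

lemma prod_pi_bool_snoc {M : Type*} [CommMonoid M] {k : ℕ}
    (F : (Fin (k+1) → Bool) → M) :
    ∏ ω : Fin (k+1) → Bool, F ω
      = (∏ ω : Fin k → Bool, F (Fin.snoc ω false)) *
        ∏ ω : Fin k → Bool, F (Fin.snoc ω true) := by
  rw [← (Fin.snocEquiv (fun _ => Bool)).prod_comp F]
  rw [Fintype.prod_prod_type]
  rw [Fintype.prod_bool]
  simp [Fin.snocEquiv, mul_comm]

lemma cnt_snoc {k : ℕ} (ω : Fin k → Bool) (c : Bool) :
    (Finset.univ.filter (fun i : Fin (k+1) => (Fin.snoc ω c : Fin (k+1) → Bool) i = true)).card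
      = (Finset.univ.filter (fun i => ω i = true)).card + (if c then 1 else 0) := by
  rw [Finset.card_filter, Finset.card_filter, Fin.sum_univ_castSucc]
  simp

lemma shiftsum_snoc {k : ℕ} (ω : Fin k → Bool) (c : Bool) (a b : Fin k → ℤ) (s t : ℤ) :
    ∑ i : Fin (k+1), (if (Fin.snoc ω c : Fin (k+1) → Bool) i
        then (Fin.snoc b t : Fin (k+1) → ℤ) i else (Fin.snoc a s : Fin (k+1) → ℤ) i)
      = (∑ i : Fin k, if ω i then b i else a i) + (if c then t else s) := by
  rw [Fin.sum_univ_castSucc]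
  simp

/-- The cube product appearing in the Gowers–Peluse inner product. -/
def Pfun (k : ℕ) (f : ℤ → ℂ) (a b : Fin k → ℤ) (y : ℤ) : ℂ :=
  ∏ ω : Fin k → Bool,
    (if Even (Finset.univ.filter (fun i => ω i = true)).card
      then f (y + ∑ i, if ω i then b i else a i)
      else (starRingEnd ℂ) (f (y + ∑ i, if ω i then b i else a i)))

def Wfun {k : ℕ} (ν : Fin k → ℤ → ℝ) (a b : Fin k → ℤ) : ℝ :=
  ∏ i, (ν i (a i) * ν i (b i))

lemma prob_sum_eq_one {μ : ℤ → ℝ} (hμ : IsProbMeasure μ) {H : Finset ℤ}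
    (hH : ∀ x, μ x ≠ 0 → x ∈ H) : ∑ x ∈ H, μ x = 1 := by
  rw [← hμ.2.2.2]
  exact (tsum_eq_sum (fun b hb => by_contra fun h => hb (hH b h))).symm

set_option maxHeartbeats 2000000 in
lemma gpInner_eq_sum {k : ℕ} (N : ℝ) (ν : Fin k → ℤ → ℝ) (f : ℤ → ℂ)
    (H : Finset ℤ) (hH : ∀ i x, ν i x ≠ 0 → x ∈ H)
    (X : Finset ℤ)
    (hX : ∀ x ∉ X, ∀ h h' : Fin k → ℤ,
      ((Wfun ν h h' : ℝ) : ℂ) * Pfun k f h h' x = 0) :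
    gpInner N ν (fun _ => f)
      = (N : ℂ)⁻¹ * ∑ x ∈ X, ∑ h ∈ Fintype.piFinset (fun _ : Fin k => H),
          ∑ h' ∈ Fintype.piFinset (fun _ : Fin k => H),
            ((Wfun ν h h' : ℝ) : ℂ) * Pfun k f h h' x := by
  have key : gpInner N ν (fun _ => f)
      = (N : ℂ)⁻¹ * ∑' x : ℤ, ∑' h : Fin k → ℤ, ∑' h' : Fin k → ℤ,
          ((Wfun ν h h' : ℝ) : ℂ) * Pfun k f h h' x := by
    unfold gpInner Wfun Pfun; congr 1; congr!
  rw [key]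
  congr 1
  have hWzero : ∀ (h h' : Fin k → ℤ), (∃ i, h i ∉ H ∨ h' i ∉ H) → (Wfun ν h h' : ℝ) = 0 := by
    rintro h h' ⟨i, hi⟩
    refine Finset.prod_eq_zero (Finset.mem_univ i) ?_
    rcases hi with hi | hi
    · have h0 : ν i (h i) = 0 := by by_contra hc; exact hi (hH i _ hc)
      rw [h0]; ring
    · have h0 : ν i (h' i) = 0 := by by_contra hc; exact hi (hH i _ hc)
      rw [h0]; ring
  have inner2 : ∀ (x : ℤ) (h : Fin k → ℤ),
      ∑' h' : Fin k → ℤ, ((Wfun ν h h' : ℝ) : ℂ) * Pfun k f h h' x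
        = ∑ h' ∈ Fintype.piFinset (fun _ : Fin k => H),
            ((Wfun ν h h' : ℝ) : ℂ) * Pfun k f h h' x := by
    intro x h
    refine tsum_eq_sum fun b hb => ?_
    simp only [Fintype.mem_piFinset, not_forall] at hb
    obtain ⟨i, hi⟩ := hb
    rw [hWzero h b ⟨i, Or.inr hi⟩]; simp
  have inner1 : ∀ (x : ℤ),
      ∑' h : Fin k → ℤ, ∑' h' : Fin k → ℤ, ((Wfun ν h h' : ℝ) : ℂ) * Pfun k f h h' x
        = ∑ h ∈ Fintype.piFinset (fun _ : Fin k => H),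
            ∑ h' ∈ Fintype.piFinset (fun _ : Fin k => H),
              ((Wfun ν h h' : ℝ) : ℂ) * Pfun k f h h' x := by
    intro x
    rw [tsum_congr (fun h => inner2 x h)]
    refine tsum_eq_sum fun b hb => ?_
    simp only [Fintype.mem_piFinset, not_forall] at hb
    obtain ⟨i, hi⟩ := hb
    refine Finset.sum_eq_zero fun h' _ => ?_
    rw [hWzero b h' ⟨i, Or.inl hi⟩]; simp
  rw [tsum_congr inner1]
  exact tsum_eq_sum fun x hx =>
    Finset.sum_eq_zero fun h _ => Finset.sum_eq_zero fun h' _ => hX x hx h h'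

lemma Wfun_snoc {k : ℕ} (μ : Fin (k+1) → ℤ → ℝ) (a b : Fin k → ℤ) (s t : ℤ) :
    Wfun μ (Fin.snoc a s) (Fin.snoc b t)
      = Wfun (fun i : Fin k => μ i.castSucc) a b * (μ (Fin.last k) s * μ (Fin.last k) t) := by
  unfold Wfun
  rw [Fin.prod_univ_castSucc]
  simp [mul_assoc]

lemma prod_cube_snoc (k : ℕ) (f : ℤ → ℂ) (a b : Fin k → ℤ) (s t x : ℤ) :
    Pfun (k+1) f (Fin.snoc a s) (Fin.snoc b t) x
      = Pfun k f a b (x + s) * (starRingEnd ℂ) (Pfun k f a b (x + t)) := by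
  unfold Pfun
  rw [prod_pi_bool_snoc (fun ω : Fin (k+1) → Bool =>
    (if Even (Finset.univ.filter (fun i => ω i = true)).card
      then f (x + ∑ i, if ω i then (Fin.snoc b t : Fin (k+1) → ℤ) i
        else (Fin.snoc a s : Fin (k+1) → ℤ) i)
      else (starRingEnd ℂ) (f (x + ∑ i, if ω i then (Fin.snoc b t : Fin (k+1) → ℤ) i
        else (Fin.snoc a s : Fin (k+1) → ℤ) i))))]
  congr 1
  · refine Finset.prod_congr rfl fun ω _ => ?_
    rw [cnt_snoc, shiftsum_snoc]
    simp only [if_neg (by simp : ¬(false = true)), Bool.false_eq_true, if_false, add_zero]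
    have : x + ((∑ i : Fin k, if ω i = true then b i else a i) + s)
        = (x + s) + ∑ i : Fin k, if ω i = true then b i else a i := by ring
    rw [this]
  · refine Eq.trans (Finset.prod_congr rfl fun ω _ => ?_) (map_prod (starRingEnd ℂ) _ _).symm
    rw [cnt_snoc, shiftsum_snoc]
    simp only [if_true]
    have harg : x + ((∑ i : Fin k, if ω i = true then b i else a i) + t)
        = (x + t) + ∑ i : Fin k, if ω i = true then b i else a i := by ring
    rw [harg]
    by_cases hE : Even (Finset.univ.filter (fun i => ω i = true)).card
    · simp [Nat.even_add_one, hE]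
    · simp [Nat.even_add_one, hE]

/-- The box `[-N, N] ∩ ℤ` as a finset. -/
def Hset (N : ℝ) : Finset ℤ := Finset.Icc (-(Int.floor N)) (Int.floor N)

/-- The box `[-(k+2)N, (k+2)N] ∩ ℤ` as a finset. -/
def Sset (k : ℕ) (N : ℝ) : Finset ℤ :=
  Finset.Icc (-(Int.floor (((k : ℝ) + 2) * N))) (Int.floor (((k : ℝ) + 2) * N))

lemma mem_Hset {N : ℝ} {x : ℤ} (h : |(x : ℝ)| ≤ N) : x ∈ Hset N := by
  rw [Hset, Finset.mem_Icc]
  rw [abs_le] at h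
  constructor
  · rw [neg_le]
    exact Int.le_floor.mpr (by push_cast; linarith)
  · exact Int.le_floor.mpr h.2

lemma Hset_abs {N : ℝ} {x : ℤ} (hx : x ∈ Hset N) : |(x : ℝ)| ≤ N := by
  rw [Hset, Finset.mem_Icc] at hx
  have h1 : ((x : ℤ) : ℝ) ≤ ((Int.floor N : ℤ) : ℝ) := Int.cast_le.mpr hx.2
  have h2 : ((-(Int.floor N) : ℤ) : ℝ) ≤ ((x : ℤ) : ℝ) := Int.cast_le.mpr hx.1
  have h3 : ((Int.floor N : ℤ) : ℝ) ≤ N := Int.floor_le N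
  rw [abs_le]
  push_cast at h2 ⊢
  constructor <;> linarith

lemma mem_Sset {k : ℕ} {N : ℝ} {x : ℤ} (h : |(x : ℝ)| ≤ ((k : ℝ) + 2) * N) :
    x ∈ Sset k N := by
  rw [Sset, Finset.mem_Icc]
  rw [abs_le] at h
  constructor
  · rw [neg_le]
    exact Int.le_floor.mpr (by push_cast; linarith)
  · exact Int.le_floor.mpr h.2

lemma not_mem_Sset {k : ℕ} {N : ℝ} {x : ℤ} (h : x ∉ Sset k N) :
    ¬ (|(x : ℝ)| ≤ ((k : ℝ) + 2) * N) := fun hc => h (mem_Sset hc)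

lemma card_Sset {k : ℕ} {N : ℝ} (hN : 1 ≤ N) :
    ((Sset k N).card : ℝ) ≤ (2 * (k : ℝ) + 5) * N := by
  have hN0 : (0 : ℝ) ≤ N := le_trans zero_le_one hN
  have hc0 : (0 : ℝ) ≤ ((k : ℝ) + 2) * N := by positivity
  have hf0 : 0 ≤ Int.floor (((k : ℝ) + 2) * N) := Int.floor_nonneg.mpr hc0
  rw [Sset, Int.card_Icc]
  have : (Int.floor (((k : ℝ) + 2) * N) + 1 - -(Int.floor (((k : ℝ) + 2) * N)))
      = 2 * Int.floor (((k : ℝ) + 2) * N) + 1 := by ring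
  rw [this]
  have h1 : ((2 * Int.floor (((k : ℝ) + 2) * N) + 1).toNat : ℝ)
      = ((2 * Int.floor (((k : ℝ) + 2) * N) + 1 : ℤ) : ℝ) := by
    exact_mod_cast congrArg (fun z : ℤ => (z : ℝ))
      (Int.toNat_of_nonneg (show (0:ℤ) ≤ 2 * Int.floor (((k : ℝ) + 2) * N) + 1 by linarith))
  rw [h1]
  push_cast
  have h2 : ((Int.floor (((k : ℝ) + 2) * N) : ℤ) : ℝ) ≤ ((k : ℝ) + 2) * N := Int.floor_le _
  nlinarith

lemma Pfun_supp {k : ℕ} {N : ℝ} {f : ℤ → ℂ} (hfs : ∀ x : ℤ, f x ≠ 0 → |(x : ℝ)| ≤ N)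
    (hN : 0 ≤ N) {a b : Fin k → ℤ} (ha : ∀ i, |((a i : ℤ) : ℝ)| ≤ N) {y : ℤ}
    (hy : Pfun k f a b y ≠ 0) : |(y : ℝ)| ≤ ((k : ℝ) + 1) * N := by
  have h0 : f (y + ∑ i : Fin k, a i) ≠ 0 := by
    intro h0
    apply hy
    unfold Pfun
    apply Finset.prod_eq_zero (Finset.mem_univ (fun _ => false : Fin k → Bool))
    simp [h0]
  have h1 : |((y + ∑ i : Fin k, a i : ℤ) : ℝ)| ≤ N := hfs _ h0
  have h2 : |((∑ i : Fin k, a i : ℤ) : ℝ)| ≤ (k : ℝ) * N := by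
    push_cast
    refine le_trans (Finset.abs_sum_le_sum_abs _ _) ?_
    calc ∑ i : Fin k, |((a i : ℤ) : ℝ)| ≤ ∑ _i : Fin k, N :=
          Finset.sum_le_sum fun i _ => ha i
      _ = (k : ℝ) * N := by simp [Finset.sum_const, mul_comm]
  have h3 : (y : ℝ) = ((y + ∑ i : Fin k, a i : ℤ) : ℝ) - ((∑ i : Fin k, a i : ℤ) : ℝ) := by
    push_cast; ring
  rw [h3]
  calc |((y + ∑ i : Fin k, a i : ℤ) : ℝ) - ((∑ i : Fin k, a i : ℤ) : ℝ)|
      ≤ |((y + ∑ i : Fin k, a i : ℤ) : ℝ)| + |((∑ i : Fin k, a i : ℤ) : ℝ)| := abs_sub _ _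
    _ ≤ ((k : ℝ) + 1) * N := by linarith

lemma Wfun_factors_ne_zero {k : ℕ} {ν : Fin k → ℤ → ℝ} {a b : Fin k → ℤ}
    (h : Wfun ν a b ≠ 0) : ∀ i, ν i (a i) ≠ 0 ∧ ν i (b i) ≠ 0 := by
  intro i
  have := Finset.prod_ne_zero_iff.mp h i (Finset.mem_univ i)
  exact mul_ne_zero_iff.mp this

lemma shift_sum_P {k : ℕ} {N : ℝ} {f : ℤ → ℂ} (hfs : ∀ x : ℤ, f x ≠ 0 → |(x : ℝ)| ≤ N)
    (hN : 0 ≤ N) {a b : Fin k → ℤ} (ha : ∀ i, |((a i : ℤ) : ℝ)| ≤ N) {s : ℤ}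
    (hs : |(s : ℝ)| ≤ N) :
    ∑ x ∈ Sset k N, Pfun k f a b (x + s) = ∑ y ∈ Sset k N, Pfun k f a b y := by
  have hsupp : ∀ y : ℤ, Pfun k f a b y ≠ 0 → |(y : ℝ)| ≤ ((k : ℝ) + 1) * N :=
    fun y hy => Pfun_supp hfs hN ha hy
  have e2 : ∑' y : ℤ, Pfun k f a b y = ∑ y ∈ Sset k N, Pfun k f a b y := by
    refine tsum_eq_sum fun y hy => ?_
    by_contra hP
    refine hy (mem_Sset ?_)
    calc |(y : ℝ)| ≤ ((k : ℝ) + 1) * N := hsupp y hP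
      _ ≤ ((k : ℝ) + 2) * N := by nlinarith [(Nat.cast_nonneg k : (0:ℝ) ≤ (k:ℝ))]
  have e1 : ∑' y : ℤ, Pfun k f a b y
      = ∑ y ∈ (Sset k N).map (addRightEmbedding s), Pfun k f a b y := by
    refine tsum_eq_sum fun y hy => ?_
    by_contra hP
    apply hy
    rw [Finset.mem_map]
    refine ⟨y - s, mem_Sset ?_, by simp [addRightEmbedding]⟩
    have h1 : |(y : ℝ)| ≤ ((k : ℝ) + 1) * N := hsupp y hP
    have h2 : ((y - s : ℤ) : ℝ) = (y : ℝ) - (s : ℝ) := by push_cast; ring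
    rw [h2]
    calc |(y : ℝ) - (s : ℝ)| ≤ |(y : ℝ)| + |(s : ℝ)| := abs_sub _ _
      _ ≤ ((k : ℝ) + 2) * N := by
          have hr : ((k : ℝ) + 2) * N = ((k : ℝ) + 1) * N + N := by ring
          linarith
  rw [← e2, e1, Finset.sum_map]
  refine Finset.sum_congr rfl fun x _ => ?_
  simp [addRightEmbedding]

theorem stmt_16 (k : ℕ) (N : ℝ) (hN : 1 ≤ N) (f : ℤ → ℂ)
    (hf1 : ∀ x, ‖f x‖ ≤ 1) (hfs : ∀ x : ℤ, f x ≠ 0 → |(x : ℝ)| ≤ N)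
    (μ : Fin (k + 1) → ℤ → ℝ) (hμ : ∀ i, IsProbMeasure (μ i))
    (hμs : ∀ i (x : ℤ), μ i x ≠ 0 → |(x : ℝ)| ≤ N) :
    (1 / (2 * (k + 1) + 3 : ℝ)) * gpSq N (fun i : Fin k => μ i.castSucc) f ^ 2
      ≤ gpSq N μ f := by
  have hN0 : (0:ℝ) < N := lt_of_lt_of_le one_pos hN
  have hN0' : (0:ℝ) ≤ N := le_of_lt hN0
  have hk0 : (0:ℝ) ≤ (k:ℝ) := Nat.cast_nonneg k
  set ν : Fin k → ℤ → ℝ := fun i => μ i.castSucc with hνdef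
  set μL : ℤ → ℝ := μ (Fin.last k) with hμLdef
  have hμH : ∀ (i : Fin (k+1)) (x : ℤ), μ i x ≠ 0 → x ∈ Hset N :=
    fun i x h => mem_Hset (hμs i x h)
  have hνH : ∀ (i : Fin k) (x : ℤ), ν i x ≠ 0 → x ∈ Hset N :=
    fun i x h => mem_Hset (hμs _ x h)
  have haN : ∀ (c : Fin k → ℤ), (∀ i, ν i (c i) ≠ 0) → ∀ i, |((c i : ℤ):ℝ)| ≤ N :=
    fun c hc i => hμs _ _ (hc i)
  have hW0 : ∀ a b, 0 ≤ Wfun ν a b := fun a b =>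
    Finset.prod_nonneg fun i _ => mul_nonneg ((hμ _).2.1 _) ((hμ _).2.1 _)
  set piH : Finset (Fin k → ℤ) := Fintype.piFinset (fun _ : Fin k => Hset N) with hpiH
  set Q : (Fin k → ℤ) → (Fin k → ℤ) → ℤ → ℂ :=
    fun a b x => ∑ s ∈ Hset N, ((μL s : ℝ) : ℂ) * Pfun k f a b (x + s) with hQdef
  -- Expansion at level k
  have hAc : gpInner N ν (fun _ => f)
      = (N : ℂ)⁻¹ * ∑ x ∈ Sset k N, ∑ a ∈ piH, ∑ b ∈ piH,
          ((Wfun ν a b : ℝ):ℂ) * Pfun k f a b x := by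
    refine gpInner_eq_sum N ν f (Hset N) hνH (Sset k N) ?_
    intro x hx a b
    by_cases hW : Wfun ν a b = 0
    · rw [hW]; simp
    · have ha := fun i => (Wfun_factors_ne_zero hW i).1
      suffices hP : Pfun k f a b x = 0 by rw [hP]; simp
      by_contra hP
      have h1 := Pfun_supp hfs hN0' (haN a ha) hP
      exact (not_mem_Sset hx) (le_trans h1 (by nlinarith))
  -- Expansion at level k+1
  have hBc : gpInner N μ (fun _ => f)
      = (N : ℂ)⁻¹ * ∑ x ∈ Sset k N,
          ∑ h ∈ Fintype.piFinset (fun _ : Fin (k+1) => Hset N),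
          ∑ h' ∈ Fintype.piFinset (fun _ : Fin (k+1) => Hset N),
            ((Wfun μ h h' : ℝ):ℂ) * Pfun (k+1) f h h' x := by
    refine gpInner_eq_sum N μ f (Hset N) hμH (Sset k N) ?_
    intro x hx a b
    by_cases hW : Wfun μ a b = 0
    · rw [hW]; simp
    · have ha : ∀ i, |((a i : ℤ):ℝ)| ≤ N :=
        fun i => hμs _ _ (Wfun_factors_ne_zero hW i).1
      suffices hP : Pfun (k+1) f a b x = 0 by rw [hP]; simp
      by_contra hP
      have h1 := Pfun_supp hfs hN0' ha hP
      refine (not_mem_Sset hx) (le_trans h1 ?_)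
      have : (((k+1 : ℕ)):ℝ) + 1 = (k:ℝ) + 2 := by push_cast; ring
      rw [this]
  -- snoc expansion of level k+1
  have hBc2 : gpInner N μ (fun _ => f)
      = (N : ℂ)⁻¹ * ∑ x ∈ Sset k N, ∑ a ∈ piH, ∑ b ∈ piH, ∑ u ∈ Hset N, ∑ v ∈ Hset N,
          ((Wfun ν a b * (μL u * μL v) : ℝ):ℂ) *
            (Pfun k f a b (x + u) * (starRingEnd ℂ) (Pfun k f a b (x + v))) := by
    rw [hBc]
    congr 1
    refine Finset.sum_congr rfl fun x _ => ?_
    rw [sum_piFinset_snoc2]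
    refine Finset.sum_congr rfl fun a _ => Finset.sum_congr rfl fun b _ =>
      Finset.sum_congr rfl fun u _ => Finset.sum_congr rfl fun v _ => ?_
    rw [Wfun_snoc, prod_cube_snoc]
  -- collapse inner double sum into |Q|²
  have hQQ : ∀ (a b : Fin k → ℤ) (x : ℤ),
      (∑ u ∈ Hset N, ∑ v ∈ Hset N, ((Wfun ν a b * (μL u * μL v) : ℝ):ℂ) *
        (Pfun k f a b (x + u) * (starRingEnd ℂ) (Pfun k f a b (x + v))))
      = ((Wfun ν a b : ℝ):ℂ) * ((‖Q a b x‖^2 : ℝ) : ℂ) := by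
    intro a b x
    have hconj : (starRingEnd ℂ) (Q a b x)
        = ∑ v ∈ Hset N, ((μL v : ℝ):ℂ) * (starRingEnd ℂ) (Pfun k f a b (x+v)) := by
      simp only [hQdef]
      rw [map_sum]
      exact Finset.sum_congr rfl fun v _ => by rw [map_mul, Complex.conj_ofReal]
    have hmc : Q a b x * (starRingEnd ℂ) (Q a b x) = ((‖Q a b x‖^2 : ℝ) : ℂ) := by
      rw [Complex.mul_conj']; push_cast; ring
    rw [← hmc, hconj]
    simp only [hQdef]
    rw [Finset.sum_mul_sum (Hset N) (Hset N)
      (fun u => ((μL u : ℝ):ℂ) * Pfun k f a b (x+u))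
      (fun v => ((μL v : ℝ):ℂ) * (starRingEnd ℂ) (Pfun k f a b (x+v)))]
    rw [Finset.mul_sum]
    apply Finset.sum_congr rfl
    intro u _
    rw [Finset.mul_sum]
    apply Finset.sum_congr rfl
    intro v _
    push_cast
    ring
  -- real form of level k+1
  have hB : gpSq N μ f
      = N⁻¹ * ∑ a ∈ piH, ∑ b ∈ piH, Wfun ν a b * ∑ x ∈ Sset k N, ‖Q a b x‖^2 := by
    have hc : gpInner N μ (fun _ => f)
        = (((N⁻¹ * ∑ a ∈ piH, ∑ b ∈ piH, Wfun ν a b * ∑ x ∈ Sset k N, ‖Q a b x‖^2 : ℝ)) : ℂ) := by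
      rw [hBc2]
      have hrhs : (((N⁻¹ * ∑ a ∈ piH, ∑ b ∈ piH, Wfun ν a b * ∑ x ∈ Sset k N, ‖Q a b x‖^2 : ℝ)) : ℂ)
          = (N : ℂ)⁻¹ * ∑ a ∈ piH, ∑ b ∈ piH,
              ((Wfun ν a b : ℝ):ℂ) * ∑ x ∈ Sset k N, ((‖Q a b x‖^2 : ℝ) : ℂ) := by
        push_cast
        ring
      rw [hrhs]
      congr 1
      rw [Finset.sum_comm]
      refine Finset.sum_congr rfl fun a _ => ?_
      rw [Finset.sum_comm]
      refine Finset.sum_congr rfl fun b _ => ?_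
      rw [Finset.mul_sum]
      refine Finset.sum_congr rfl fun x _ => ?_
      exact hQQ a b x
    rw [gpSq, hc, Complex.ofReal_re]
  -- shift identity: ∑ P = ∑ Q
  have hQP : ∀ a b, Wfun ν a b ≠ 0 →
      ∑ x ∈ Sset k N, Pfun k f a b x = ∑ x ∈ Sset k N, Q a b x := by
    intro a b hW
    have ha : ∀ i, |((a i : ℤ):ℝ)| ≤ N := haN a (fun i => (Wfun_factors_ne_zero hW i).1)
    have h1 : ∑ x ∈ Sset k N, Q a b x
        = ∑ u ∈ Hset N, ((μL u : ℝ):ℂ) * ∑ x ∈ Sset k N, Pfun k f a b (x+u) := by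
      rw [hQdef, Finset.sum_comm]
      exact Finset.sum_congr rfl fun u _ => (Finset.mul_sum _ _ _).symm
    have h2 : ∀ u ∈ Hset N, ((μL u : ℝ):ℂ) * ∑ x ∈ Sset k N, Pfun k f a b (x+u)
        = ((μL u : ℝ):ℂ) * ∑ x ∈ Sset k N, Pfun k f a b x := by
      intro u _
      by_cases h : μL u = 0
      · rw [h]; simp
      · rw [shift_sum_P hfs hN0' ha (hμs _ _ h)]
    have h4 : (∑ u ∈ Hset N, ((μL u : ℝ):ℂ)) = 1 := by
      have h5 : ∑ u ∈ Hset N, μL u = 1 :=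
        prob_sum_eq_one (hμ (Fin.last k)) (hμH (Fin.last k))
      rw [← Complex.ofReal_sum, h5, Complex.ofReal_one]
    rw [h1, Finset.sum_congr rfl h2, ← Finset.sum_mul, h4, one_mul]
  -- level k in terms of Q
  have hA : gpSq N ν f = ((N : ℂ)⁻¹ * ∑ a ∈ piH, ∑ b ∈ piH,
      ((Wfun ν a b : ℝ):ℂ) * ∑ x ∈ Sset k N, Q a b x).re := by
    rw [gpSq, hAc]
    congr 2
    rw [Finset.sum_comm]
    refine Finset.sum_congr rfl fun a _ => ?_
    rw [Finset.sum_comm]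
    refine Finset.sum_congr rfl fun b _ => ?_
    rw [← Finset.mul_sum]
    by_cases hW : Wfun ν a b = 0
    · rw [hW]; simp
    · rw [hQP a b hW]
  -- bound |gpSq_k|
  have habs : |gpSq N ν f|
      ≤ N⁻¹ * ∑ a ∈ piH, ∑ b ∈ piH, Wfun ν a b * ‖∑ x ∈ Sset k N, Q a b x‖ := by
    rw [hA]
    refine le_trans (Complex.abs_re_le_norm _) ?_
    rw [norm_mul, norm_inv, Complex.norm_real,
      Real.norm_eq_abs, abs_of_nonneg hN0']
    refine mul_le_mul_of_nonneg_left ?_ (by positivity)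
    refine le_trans (norm_sum_le _ _) ?_
    refine Finset.sum_le_sum fun a _ => ?_
    refine le_trans (norm_sum_le _ _) ?_
    refine Finset.sum_le_sum fun b _ => ?_
    rw [norm_mul, Complex.norm_real, Real.norm_eq_abs, abs_of_nonneg (hW0 a b)]
  -- total mass one
  have hW1 : ∑ a ∈ piH, ∑ b ∈ piH, Wfun ν a b = 1 := by
    have hone : ∀ i : Fin k, ∑ x ∈ Hset N, ν i x = 1 :=
      fun i => prob_sum_eq_one (hμ i.castSucc) (fun x h => hνH i x h)
    have hfac : ∀ a b : Fin k → ℤ, Wfun ν a b = (∏ i, ν i (a i)) * (∏ i, ν i (b i)) :=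
      fun a b => by rw [Wfun, Finset.prod_mul_distrib]
    have hsum1 : ∑ a ∈ piH, ∏ i, ν i (a i) = 1 := by
      rw [hpiH, ← Finset.prod_univ_sum]
      simp [hone]
    calc ∑ a ∈ piH, ∑ b ∈ piH, Wfun ν a b
        = ∑ a ∈ piH, ∑ b ∈ piH, (∏ i, ν i (a i)) * (∏ i, ν i (b i)) := by
          exact Finset.sum_congr rfl fun a _ => Finset.sum_congr rfl fun b _ => hfac a b
      _ = (∑ a ∈ piH, ∏ i, ν i (a i)) * (∑ b ∈ piH, ∏ i, ν i (b i)) :=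
          (Finset.sum_mul_sum _ _ _ _).symm
      _ = 1 := by rw [hsum1, one_mul]
  have hg0 : 0 ≤ gpSq N μ f := by
    rw [hB]
    exact mul_nonneg (by positivity) (Finset.sum_nonneg fun a _ => Finset.sum_nonneg fun b _ =>
      mul_nonneg (hW0 a b) (Finset.sum_nonneg fun x _ => sq_nonneg _))
  -- Cauchy-Schwarz in the measure
  have hCS1 : (∑ a ∈ piH, ∑ b ∈ piH, Wfun ν a b * ‖∑ x ∈ Sset k N, Q a b x‖)^2
      ≤ ∑ a ∈ piH, ∑ b ∈ piH, Wfun ν a b * ‖∑ x ∈ Sset k N, Q a b x‖^2 := by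
    rw [← Finset.sum_product' (s := piH) (t := piH)
        (f := fun a b => Wfun ν a b * ‖∑ x ∈ Sset k N, Q a b x‖),
      ← Finset.sum_product' (s := piH) (t := piH)
        (f := fun a b => Wfun ν a b * ‖∑ x ∈ Sset k N, Q a b x‖^2)]
    have hW1' : ∑ p ∈ piH ×ˢ piH, Wfun ν p.1 p.2 = 1 := by
      rw [Finset.sum_product' (f := fun a b => Wfun ν a b)]
      exact hW1
    have hcs := Finset.sum_mul_sq_le_sq_mul_sq (piH ×ˢ piH)
      (fun p => Real.sqrt (Wfun ν p.1 p.2))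
      (fun p => Real.sqrt (Wfun ν p.1 p.2) * ‖∑ x ∈ Sset k N, Q p.1 p.2 x‖)
    have e1 : ∀ p : (Fin k → ℤ) × (Fin k → ℤ),
        Real.sqrt (Wfun ν p.1 p.2) * (Real.sqrt (Wfun ν p.1 p.2) * ‖∑ x ∈ Sset k N, Q p.1 p.2 x‖)
          = Wfun ν p.1 p.2 * ‖∑ x ∈ Sset k N, Q p.1 p.2 x‖ := fun p => by
      rw [← mul_assoc, Real.mul_self_sqrt (hW0 _ _)]
    have e2 : ∀ p : (Fin k → ℤ) × (Fin k → ℤ),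
        (Real.sqrt (Wfun ν p.1 p.2))^2 = Wfun ν p.1 p.2 := fun p => Real.sq_sqrt (hW0 _ _)
    have e3 : ∀ p : (Fin k → ℤ) × (Fin k → ℤ),
        (Real.sqrt (Wfun ν p.1 p.2) * ‖∑ x ∈ Sset k N, Q p.1 p.2 x‖)^2
          = Wfun ν p.1 p.2 * ‖∑ x ∈ Sset k N, Q p.1 p.2 x‖^2 := fun p => by
      rw [mul_pow, e2 p]
    rw [Finset.sum_congr rfl (fun p _ => e1 p), Finset.sum_congr rfl (fun p _ => e2 p),
      Finset.sum_congr rfl (fun p _ => e3 p), hW1', one_mul] at hcs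
    exact hcs
  -- per-pair Cauchy-Schwarz over x
  have hCS2 : ∀ a b : Fin k → ℤ, ‖∑ x ∈ Sset k N, Q a b x‖^2
      ≤ ((Sset k N).card : ℝ) * ∑ x ∈ Sset k N, ‖Q a b x‖^2 := by
    intro a b
    have h1 : ‖∑ x ∈ Sset k N, Q a b x‖ ≤ ∑ x ∈ Sset k N, ‖Q a b x‖ := norm_sum_le _ _
    have h2 : (∑ x ∈ Sset k N, ‖Q a b x‖)^2
        ≤ ((Sset k N).card : ℝ) * ∑ x ∈ Sset k N, ‖Q a b x‖^2 :=
      sq_sum_le_card_mul_sum_sq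
    calc ‖∑ x ∈ Sset k N, Q a b x‖^2 ≤ (∑ x ∈ Sset k N, ‖Q a b x‖)^2 :=
          pow_le_pow_left₀ (norm_nonneg _) h1 2
      _ ≤ _ := h2
  -- assemble
  have hmain : (gpSq N ν f)^2 ≤ (2*(k:ℝ)+5) * gpSq N μ f := by
    have hT0 : 0 ≤ ∑ a ∈ piH, ∑ b ∈ piH, Wfun ν a b * ‖∑ x ∈ Sset k N, Q a b x‖ :=
      Finset.sum_nonneg fun a _ => Finset.sum_nonneg fun b _ =>
        mul_nonneg (hW0 a b) (norm_nonneg _)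
    have step1 : (gpSq N ν f)^2
        ≤ (N⁻¹ * ∑ a ∈ piH, ∑ b ∈ piH, Wfun ν a b * ‖∑ x ∈ Sset k N, Q a b x‖)^2 := by
      rw [← sq_abs (gpSq N ν f)]
      exact pow_le_pow_left₀ (abs_nonneg _) habs 2
    have step2 : (N⁻¹ * ∑ a ∈ piH, ∑ b ∈ piH, Wfun ν a b * ‖∑ x ∈ Sset k N, Q a b x‖)^2
        = N⁻¹^2 * (∑ a ∈ piH, ∑ b ∈ piH, Wfun ν a b * ‖∑ x ∈ Sset k N, Q a b x‖)^2 :=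
      mul_pow _ _ 2
    have step3 : ∑ a ∈ piH, ∑ b ∈ piH, Wfun ν a b * ‖∑ x ∈ Sset k N, Q a b x‖^2
        ≤ ((Sset k N).card : ℝ) * ∑ a ∈ piH, ∑ b ∈ piH, Wfun ν a b * ∑ x ∈ Sset k N, ‖Q a b x‖^2 := by
      rw [Finset.mul_sum]
      refine Finset.sum_le_sum fun a _ => ?_
      rw [Finset.mul_sum]
      refine Finset.sum_le_sum fun b _ => ?_
      rw [← mul_assoc, mul_comm ((Sset k N).card : ℝ) (Wfun ν a b), mul_assoc]
      exact mul_le_mul_of_nonneg_left (hCS2 a b) (hW0 a b)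
    have hcard : ((Sset k N).card : ℝ) ≤ (2*(k:ℝ)+5) * N := card_Sset hN
    have hsum0 : 0 ≤ ∑ a ∈ piH, ∑ b ∈ piH, Wfun ν a b * ∑ x ∈ Sset k N, ‖Q a b x‖^2 :=
      Finset.sum_nonneg fun a _ => Finset.sum_nonneg fun b _ =>
        mul_nonneg (hW0 a b) (Finset.sum_nonneg fun x _ => sq_nonneg _)
    calc (gpSq N ν f)^2
        ≤ (N⁻¹ * ∑ a ∈ piH, ∑ b ∈ piH, Wfun ν a b * ‖∑ x ∈ Sset k N, Q a b x‖)^2 := step1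
      _ = N⁻¹^2 * (∑ a ∈ piH, ∑ b ∈ piH, Wfun ν a b * ‖∑ x ∈ Sset k N, Q a b x‖)^2 := step2
      _ ≤ N⁻¹^2 * (∑ a ∈ piH, ∑ b ∈ piH, Wfun ν a b * ‖∑ x ∈ Sset k N, Q a b x‖^2) :=
          mul_le_mul_of_nonneg_left hCS1 (by positivity)
      _ ≤ N⁻¹^2 * (((Sset k N).card : ℝ) *
            ∑ a ∈ piH, ∑ b ∈ piH, Wfun ν a b * ∑ x ∈ Sset k N, ‖Q a b x‖^2) :=
          mul_le_mul_of_nonneg_left step3 (by positivity)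
      _ ≤ N⁻¹^2 * (((2*(k:ℝ)+5) * N) *
            ∑ a ∈ piH, ∑ b ∈ piH, Wfun ν a b * ∑ x ∈ Sset k N, ‖Q a b x‖^2) := by
          refine mul_le_mul_of_nonneg_left (mul_le_mul_of_nonneg_right hcard hsum0) (by positivity)
      _ = (2*(k:ℝ)+5) * (N⁻¹ * ∑ a ∈ piH, ∑ b ∈ piH, Wfun ν a b * ∑ x ∈ Sset k N, ‖Q a b x‖^2) := by
          field_simp
      _ = (2*(k:ℝ)+5) * gpSq N μ f := by rw [← hB]
  have h2k5 : (0:ℝ) < 2*(k:ℝ)+5 := by positivity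
  have hco : (2 * ((k:ℝ) + 1) + 3 : ℝ) = 2*(k:ℝ)+5 := by ring
  rw [hco, one_div, inv_mul_le_iff₀ h2k5]
  exact hmain
end
end

section
/- There is an absolute constant C such that for all sufficiently large X the following two bounds hold, where Q := exp((log √X)^{1/10}), t := 20 log log X, P_Q is the set of primes ≤ Q, Λ^♯(x) := ∏_{p ≤ Q, p prime} (1 − 1/p)^{−1} · ∑_{S ⊆ P_Q, |S| ≤ t} (−1)^{|S|} 1[(∏_{p∈S} p) divides x], and Λ^♭ := Λ_Q − Λ^♯: (i) ∑_{1 ≤ x ≤ √X} |Λ^♭(x)| ≤ C·√X·(log X)^{−8}; (ii) ∑_{1 ≤ x ≤ √X} |Λ^♯(x)| ≤ C·√X·(log X)². -/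
open Filter

noncomputable section
open scoped Classical

/-- The primes `p ≤ Q`. -/
def primesUpTo (Q : ℝ) : Finset ℕ := (Finset.range (⌊Q⌋₊ + 1)).filter Nat.Prime

/-- The Cramér model `Λ_Q` at level `Q`. -/
def cramerQ (Q : ℝ) (x : ℤ) : ℝ :=
  (∏ p ∈ primesUpTo Q, ((1 : ℝ) - (p : ℝ)⁻¹)⁻¹) *
    (if ∀ p ∈ primesUpTo Q, Int.gcd x p = 1 then 1 else 0)

/-- The level `Q = exp((log √X)^{1/10})` used throughout. -/
def cramerLevel (X : ℝ) : ℝ := Real.exp (Real.log (Real.sqrt X) ^ ((1 : ℝ) / 10))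

/-- The truncated Cramér model `Λ^♯`, restricting the inclusion–exclusion expansion of
`Λ_Q` to squarefree moduli with at most `t = 20 log log X` prime factors, all `≤ Q`. -/
def lamSharp (X : ℝ) (x : ℤ) : ℝ :=
  (∏ p ∈ primesUpTo (cramerLevel X), ((1 : ℝ) - (p : ℝ)⁻¹)⁻¹) *
    ∑ S ∈ (primesUpTo (cramerLevel X)).powerset.filter
        (fun S => (S.card : ℝ) ≤ 20 * Real.log (Real.log X)),
      (-1 : ℝ) ^ S.card * (if (∏ p ∈ S, (p : ℤ)) ∣ x then 1 else 0)

/-! ### Auxiliary lemmas -/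

section Aux

/-- Chebyshev-type bound from the primorial estimate. -/
lemma aux_cheb (n : ℕ) :
    ∑ p ∈ (Finset.range (n+1)).filter Nat.Prime, Real.log p ≤ n * Real.log 4 := by
  have h1 : (primorial n : ℝ) ≤ (4:ℝ) ^ n := by
    exact_mod_cast primorial_le_4_pow n
  have h2 : Real.log (primorial n) ≤ Real.log ((4:ℝ)^n) :=
    Real.log_le_log (by exact_mod_cast primorial_pos n) h1
  rw [Real.log_pow] at h2
  calc ∑ p ∈ (Finset.range (n+1)).filter Nat.Prime, Real.log p
      = Real.log (primorial n : ℝ) := by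
        rw [primorial, Nat.cast_prod, Real.log_prod]
        intro p hp
        exact_mod_cast (Finset.mem_filter.1 hp).2.pos.ne'
    _ ≤ n * Real.log 4 := by exact_mod_cast h2

/-- Dyadic block bound: the sum of reciprocals of primes in `[2^j, 2^{j+1})` is at most `4/j`. -/
lemma aux_block (j : ℕ) (hj : 1 ≤ j) :
    ∑ p ∈ (Finset.Ico (2^j) (2^(j+1))).filter Nat.Prime, ((p:ℝ))⁻¹ ≤ 4 / j := by
  set B := (Finset.Ico (2^j) (2^(j+1))).filter Nat.Prime with hB
  have hlog2 : (0:ℝ) < Real.log 2 := Real.log_pos (by norm_num)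
  have hcard : (B.card : ℝ) * (j * Real.log 2) ≤ 2^(j+2) * Real.log 2 := by
    have h1 : (B.card : ℝ) * (j * Real.log 2) ≤ ∑ p ∈ B, Real.log p := by
      calc (B.card : ℝ) * (j * Real.log 2) = ∑ _p ∈ B, (j * Real.log 2) := by
            rw [Finset.sum_const, nsmul_eq_mul]
        _ ≤ ∑ p ∈ B, Real.log p := by
            apply Finset.sum_le_sum
            intro p hp
            simp only [hB, Finset.mem_filter, Finset.mem_Ico] at hp
            have : Real.log ((2:ℝ)^j) ≤ Real.log p := by
              apply Real.log_le_log (by positivity)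
              exact_mod_cast hp.1.1
            rwa [Real.log_pow] at this
    have h2 : ∑ p ∈ B, Real.log p
        ≤ ∑ p ∈ (Finset.range (2^(j+1)+1)).filter Nat.Prime, Real.log p := by
      apply Finset.sum_le_sum_of_subset_of_nonneg
      · intro p hp
        simp only [hB, Finset.mem_filter, Finset.mem_Ico] at hp
        simp only [Finset.mem_filter, Finset.mem_range]
        exact ⟨hp.1.2.trans (Nat.lt_succ_self _), hp.2⟩
      · intro p hp _
        exact Real.log_natCast_nonneg p
    have h3 := aux_cheb (2^(j+1))
    have h4 : ((2:ℝ)^(j+1)) * Real.log 4 = 2^(j+2) * Real.log 2 := by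
      rw [show (4:ℝ) = 2^2 by norm_num, Real.log_pow]
      push_cast
      ring
    calc (B.card : ℝ) * (j * Real.log 2) ≤ _ := h1
      _ ≤ _ := h2
      _ ≤ (2^(j+1) : ℕ) * Real.log 4 := h3
      _ = 2^(j+2) * Real.log 2 := by push_cast at h4 ⊢; linarith [h4]
  have hcard' : (B.card : ℝ) ≤ 2^(j+2) / j := by
    rw [le_div_iff₀ (by positivity)]
    nlinarith [hlog2]
  calc ∑ p ∈ B, ((p:ℝ))⁻¹ ≤ ∑ p ∈ B, ((2:ℝ)^j)⁻¹ := by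
        apply Finset.sum_le_sum
        intro p hp
        simp only [hB, Finset.mem_filter, Finset.mem_Ico] at hp
        apply inv_anti₀ (by positivity)
        exact_mod_cast hp.1.1
    _ = (B.card : ℝ) * ((2:ℝ)^j)⁻¹ := by rw [Finset.sum_const, nsmul_eq_mul]
    _ ≤ (2^(j+2) / j) * ((2:ℝ)^j)⁻¹ := by
        apply mul_le_mul_of_nonneg_right hcard' (by positivity)
    _ = 4 / j := by
        rw [pow_add]
        field_simp
        ring

lemma aux_blocks (m : ℕ) :
    ∑ p ∈ (Finset.Ico 2 (2^(m+1))).filter Nat.Prime, ((p:ℝ))⁻¹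
      ≤ ∑ j ∈ Finset.Icc 1 m, 4 / (j:ℝ) := by
  induction m with
  | zero => simp
  | succ m ih =>
    have hsplit : Finset.Ico 2 (2^(m+2))
        = Finset.Ico 2 (2^(m+1)) ∪ Finset.Ico (2^(m+1)) (2^(m+2)) := by
      rw [Finset.Ico_union_Ico_eq_Ico]
      · exact Nat.one_lt_two_pow (by omega)
      · exact Nat.pow_le_pow_right (by norm_num) (by omega)
    rw [hsplit, Finset.filter_union, Finset.sum_union]
    · have h2 : ∑ j ∈ Finset.Icc 1 (m+1), 4/(j:ℝ)
          = (∑ j ∈ Finset.Icc 1 m, 4/(j:ℝ)) + 4/(m+1:ℝ) := by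
        rw [Finset.sum_Icc_succ_top (by omega : 1 ≤ m+1)]
        push_cast; ring
      rw [h2]
      have := aux_block (m+1) (by omega)
      push_cast at this ⊢
      exact add_le_add ih this
    · apply Finset.disjoint_filter_filter
      exact Finset.Ico_disjoint_Ico_consecutive _ _ _

/-- A Mertens-type upper bound: `∑_{p ≤ Q} 1/p ≤ 4 log log Q + 8`. -/
lemma aux_mertens {Q : ℝ} (hQ : 16 ≤ Q) :
    ∑ p ∈ primesUpTo Q, ((p:ℝ))⁻¹ ≤ 4 * Real.log (Real.log Q) + 8 := by
  set n := ⌊Q⌋₊ with hn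
  have hn16 : 16 ≤ n := Nat.le_floor (by exact_mod_cast hQ)
  set J := Nat.log 2 n with hJ
  have hJ4 : 4 ≤ J := by
    have h := Nat.log_mono_right (b := 2) hn16
    have : Nat.log 2 16 = 4 := Nat.log_eq_of_pow_le_of_lt_pow (by norm_num) (by norm_num)
    omega
  have hsub : primesUpTo Q ⊆ (Finset.Ico 2 (2^(J+1))).filter Nat.Prime := by
    intro p hp
    simp only [primesUpTo, Finset.mem_filter, Finset.mem_range, Finset.mem_Ico] at hp ⊢
    refine ⟨⟨hp.2.two_le, ?_⟩, hp.2⟩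
    have h1 : p ≤ n := by omega
    have h2 : n < 2^(J+1) := Nat.lt_pow_succ_log_self (by norm_num) n
    omega
  have hE : ∑ p ∈ primesUpTo Q, ((p:ℝ))⁻¹ ≤ ∑ j ∈ Finset.Icc 1 J, 4 / (j:ℝ) := by
    refine le_trans (Finset.sum_le_sum_of_subset_of_nonneg hsub ?_) (aux_blocks J)
    intro p _ _; positivity
  have hharm : ∑ j ∈ Finset.Icc 1 J, 4 / (j:ℝ) ≤ 4 * (1 + Real.log J) := by
    have h := harmonic_le_one_add_log J
    rw [harmonic_eq_sum_Icc] at h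
    push_cast at h
    have heq : ∑ j ∈ Finset.Icc 1 J, 4 / (j:ℝ) = 4 * ∑ j ∈ Finset.Icc 1 J, ((j:ℝ))⁻¹ := by
      rw [Finset.mul_sum]; exact Finset.sum_congr rfl fun j _ => div_eq_mul_inv 4 _
    rw [heq]
    linarith
  have hQ0 : (0:ℝ) < Q := by linarith
  have hlogQ : Real.log 16 ≤ Real.log Q := Real.log_le_log (by norm_num) hQ
  have h16 : (2.77 : ℝ) ≤ Real.log 16 := by
    have h2 : (0.6931471803 : ℝ) < Real.log 2 := Real.log_two_gt_d9
    have : Real.log 16 = 4 * Real.log 2 := by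
      rw [show (16:ℝ) = 2^4 by norm_num, Real.log_pow]; push_cast; ring
    linarith
  have hJle : (J:ℝ) ≤ 2 * Real.log Q := by
    have h1 : (2:ℝ)^J ≤ n := by exact_mod_cast Nat.pow_log_le_self 2 (by omega : n ≠ 0)
    have h2 : (n:ℝ) ≤ Q := Nat.floor_le (le_of_lt hQ0)
    have h3 : (J:ℝ) * Real.log 2 ≤ Real.log Q := by
      have := Real.log_le_log (by positivity) (h1.trans h2)
      rwa [Real.log_pow] at this
    have h2' : (0.6931471803 : ℝ) < Real.log 2 := Real.log_two_gt_d9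
    nlinarith [Nat.cast_nonneg (α := ℝ) J]
  have hlogJ : Real.log J ≤ 1 + Real.log (Real.log Q) := by
    calc Real.log J ≤ Real.log (2 * Real.log Q) := by
          apply Real.log_le_log (by positivity) hJle
      _ = Real.log 2 + Real.log (Real.log Q) := by
          rw [Real.log_mul (by norm_num) (by linarith)]
      _ ≤ 1 + Real.log (Real.log Q) := by
          have := Real.log_two_lt_d9
          linarith
  linarith

lemma aux_dvd_prod_iff {S : Finset ℕ} (hS : ∀ p ∈ S, Nat.Prime p) (x : ℤ) :
    ((∏ p ∈ S, (p:ℤ)) ∣ x) ↔ ∀ p ∈ S, (p:ℤ) ∣ x := by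
  constructor
  · intro h p hp
    exact (Finset.dvd_prod_of_mem _ hp).trans h
  · intro h
    have h1 : (∏ p ∈ S, (p:ℤ)) = ((∏ p ∈ S, p : ℕ) : ℤ) := by push_cast; rfl
    rw [h1, Int.natCast_dvd]
    apply Finset.prod_primes_dvd
    · exact fun p hp => (hS p hp).prime
    · exact fun p hp => Int.natCast_dvd.mp (h p hp)

lemma aux_gcd_one_iff {p : ℕ} (hp : Nat.Prime p) (x : ℤ) :
    Int.gcd x p = 1 ↔ ¬ ((p:ℤ) ∣ x) := by
  show x.natAbs.gcd p = 1 ↔ _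
  rw [Nat.gcd_comm]
  exact (Nat.Prime.coprime_iff_not_dvd hp).trans (by rw [Int.natCast_dvd])

/-- Inclusion–exclusion over the primes up to `Q`. -/
lemma aux_IE (Q : ℝ) (x : ℤ) :
    (if ∀ p ∈ primesUpTo Q, Int.gcd x p = 1 then (1:ℝ) else 0)
      = ∑ S ∈ (primesUpTo Q).powerset,
          (-1:ℝ)^S.card * (if (∏ p ∈ S, (p:ℤ)) ∣ x then 1 else 0) := by
  have hrhs : ∀ S ∈ (primesUpTo Q).powerset,
      (-1:ℝ)^S.card * (if (∏ p ∈ S, (p:ℤ)) ∣ x then 1 else 0)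
        = (∏ p ∈ S, (-(if (p:ℤ) ∣ x then (1:ℝ) else 0))) * ∏ p ∈ primesUpTo Q \ S, (1:ℝ) := by
    intro S hS
    have hprimes : ∀ p ∈ S, Nat.Prime p := fun p hp =>
      (Finset.mem_filter.1 (Finset.mem_powerset.1 hS hp)).2
    calc (-1:ℝ)^S.card * (if (∏ p ∈ S, (p:ℤ)) ∣ x then 1 else 0)
        = (-1:ℝ)^S.card * (if ∀ p ∈ S, (p:ℤ) ∣ x then 1 else 0) := by
          rw [if_congr (aux_dvd_prod_iff hprimes x) rfl rfl]
      _ = (-1:ℝ)^S.card * ∏ p ∈ S, (if (p:ℤ) ∣ x then (1:ℝ) else 0) := by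
          rw [Finset.prod_boole]
      _ = (∏ _p ∈ S, (-1:ℝ)) * ∏ p ∈ S, (if (p:ℤ) ∣ x then (1:ℝ) else 0) := by
          rw [Finset.prod_const]
      _ = ∏ p ∈ S, (-(if (p:ℤ) ∣ x then (1:ℝ) else 0)) := by
          rw [← Finset.prod_mul_distrib]
          exact Finset.prod_congr rfl fun p _ => neg_one_mul _
      _ = _ := by rw [Finset.prod_const_one, mul_one]
  rw [Finset.sum_congr rfl hrhs, ← Finset.prod_add]
  have hfac : ∀ p ∈ primesUpTo Q,
      (-(if (p:ℤ) ∣ x then (1:ℝ) else 0)) + 1 = (if Int.gcd x p = 1 then (1:ℝ) else 0) := by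
    intro p hp
    have hp' : Nat.Prime p := (Finset.mem_filter.1 hp).2
    simp only [aux_gcd_one_iff hp']
    by_cases h : (p:ℤ) ∣ x <;> simp [h]
  rw [Finset.prod_congr rfl hfac, Finset.prod_boole]

lemma aux_count_multiples {d N : ℤ} (hd : 1 ≤ d) (hN : 0 ≤ N) :
    ∑ x ∈ Finset.Icc (1:ℤ) N, (if d ∣ x then (1:ℝ) else 0) ≤ (N:ℝ)/(d:ℝ) := by
  have hd0 : (0:ℤ) < d := hd
  rw [Finset.sum_boole]
  have hcard : ((Finset.Icc (1:ℤ) N).filter (fun x => d ∣ x)).card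
      ≤ (Finset.Icc (1:ℤ) (N/d)).card := by
    apply Finset.card_le_card_of_injOn (fun x => x / d)
    · intro x hx
      simp only [Finset.mem_coe, Finset.mem_filter, Finset.mem_Icc] at hx ⊢
      obtain ⟨⟨h1, h2⟩, h3⟩ := hx
      constructor
      · rw [Int.le_ediv_iff_mul_le hd0, one_mul]
        exact Int.le_of_dvd (by omega) h3
      · exact Int.ediv_le_ediv hd0 h2
    · intro x hx y hy hxy
      simp only [Finset.mem_coe, Finset.mem_filter] at hx hy
      have hx' := Int.ediv_mul_cancel hx.2
      have hy' := Int.ediv_mul_cancel hy.2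
      simp only at hxy
      rw [← hx', ← hy', hxy]
  have h2 : ((Finset.Icc (1:ℤ) (N/d)).card : ℝ) ≤ (N:ℝ)/(d:ℝ) := by
    rw [Int.card_Icc]
    have h3 : (N/d : ℤ) * d ≤ N := Int.ediv_mul_le N (by omega)
    have h4 : ((N/d : ℤ) : ℝ) ≤ (N:ℝ)/(d:ℝ) := by
      rw [le_div_iff₀ (by exact_mod_cast hd0)]
      exact_mod_cast h3
    have h5 : (0:ℤ) ≤ N/d := Int.ediv_nonneg hN (by omega)
    have h6 : ((N/d + 1 - 1 : ℤ).toNat : ℝ) = ((N/d : ℤ) : ℝ) := by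
      rw [show (N/d + 1 - 1 : ℤ) = N/d by ring]
      exact_mod_cast Int.toNat_of_nonneg h5
    rw [h6]; exact h4
  calc (((Finset.Icc (1:ℤ) N).filter (fun x => d ∣ x)).card : ℝ)
      ≤ ((Finset.Icc (1:ℤ) (N/d)).card : ℝ) := by exact_mod_cast hcard
    _ ≤ _ := h2

lemma aux_sum_abs_bound (Q : ℝ) (N : ℤ) (hN : 0 ≤ N) (F : Finset (Finset ℕ))
    (hF : F ⊆ (primesUpTo Q).powerset) :
    ∑ x ∈ Finset.Icc (1:ℤ) N,
        |∑ S ∈ F, (-1:ℝ)^S.card * (if (∏ p ∈ S, (p:ℤ)) ∣ x then 1 else 0)|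
      ≤ ∑ S ∈ F, (N:ℝ) * ∏ p ∈ S, ((p:ℝ))⁻¹ := by
  have hprime : ∀ S ∈ F, ∀ p ∈ S, Nat.Prime p := by
    intro S hS p hp
    exact (Finset.mem_filter.1 (Finset.mem_powerset.1 (hF hS) hp)).2
  calc ∑ x ∈ Finset.Icc (1:ℤ) N,
        |∑ S ∈ F, (-1:ℝ)^S.card * (if (∏ p ∈ S, (p:ℤ)) ∣ x then 1 else 0)|
      ≤ ∑ x ∈ Finset.Icc (1:ℤ) N, ∑ S ∈ F, (if (∏ p ∈ S, (p:ℤ)) ∣ x then (1:ℝ) else 0) := by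
        apply Finset.sum_le_sum
        intro x _
        refine (Finset.abs_sum_le_sum_abs _ _).trans (le_of_eq ?_)
        apply Finset.sum_congr rfl
        intro S _
        rw [abs_mul, abs_pow, abs_neg, abs_one, one_pow, one_mul,
          abs_of_nonneg (by positivity)]
    _ = ∑ S ∈ F, ∑ x ∈ Finset.Icc (1:ℤ) N, (if (∏ p ∈ S, (p:ℤ)) ∣ x then (1:ℝ) else 0) :=
        Finset.sum_comm
    _ ≤ ∑ S ∈ F, (N:ℝ) * ∏ p ∈ S, ((p:ℝ))⁻¹ := by
        apply Finset.sum_le_sum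
        intro S hS
        have hd : (1:ℤ) ≤ ∏ p ∈ S, (p:ℤ) := by
          have h1 : (1:ℕ) ≤ ∏ p ∈ S, p :=
            Finset.one_le_prod' fun p hp => (hprime S hS p hp).one_lt.le
          calc (1:ℤ) ≤ ((∏ p ∈ S, p : ℕ) : ℤ) := by exact_mod_cast h1
            _ = ∏ p ∈ S, (p:ℤ) := by push_cast; rfl
        refine (aux_count_multiples hd hN).trans (le_of_eq ?_)
        rw [div_eq_mul_inv]
        congr 1
        rw [show ((∏ p ∈ S, (p:ℤ) : ℤ):ℝ) = ∏ p ∈ S, (p:ℝ) by push_cast; rfl,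
          Finset.prod_inv_distrib]

lemma aux_powerset_sum (T : Finset ℕ) (f : ℕ → ℝ) :
    ∑ S ∈ T.powerset, ∏ p ∈ S, f p = ∏ p ∈ T, (f p + 1) := by
  rw [Finset.prod_add]
  simp

lemma aux_prod_add_one_le_exp (T : Finset ℕ) (f : ℕ → ℝ) (hf : ∀ p ∈ T, 0 ≤ f p) :
    ∏ p ∈ T, (f p + 1) ≤ Real.exp (∑ p ∈ T, f p) := by
  rw [Real.exp_sum]
  apply Finset.prod_le_prod
  · intro p hp; have := hf p hp; linarith
  · intro p hp; exact Real.add_one_le_exp (f p)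

lemma aux_prime_factor_nonneg {Q : ℝ} {p : ℕ} (hp : p ∈ primesUpTo Q) :
    (0:ℝ) ≤ ((1 : ℝ) - (p : ℝ)⁻¹)⁻¹ := by
  have h2 : (2:ℕ) ≤ p := (Finset.mem_filter.1 hp).2.two_le
  have h2' : (2:ℝ) ≤ (p:ℝ) := by exact_mod_cast h2
  have hpinv : (p:ℝ)⁻¹ ≤ 1/2 := by
    rw [inv_le_comm₀ (by positivity) (by norm_num)]
    linarith
  have : (0:ℝ) < 1 - (p:ℝ)⁻¹ := by linarith
  positivity

lemma aux_P_nonneg (Q : ℝ) : (0:ℝ) ≤ ∏ p ∈ primesUpTo Q, ((1 : ℝ) - (p : ℝ)⁻¹)⁻¹ :=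
  Finset.prod_nonneg fun p hp => aux_prime_factor_nonneg hp

lemma aux_P_le (Q : ℝ) :
    ∏ p ∈ primesUpTo Q, ((1 : ℝ) - (p : ℝ)⁻¹)⁻¹
      ≤ Real.exp (2 * ∑ p ∈ primesUpTo Q, ((p:ℝ))⁻¹) := by
  rw [Finset.mul_sum, Real.exp_sum]
  apply Finset.prod_le_prod
  · intro p hp; exact aux_prime_factor_nonneg hp
  · intro p hp
    have h2 : (2:ℕ) ≤ p := (Finset.mem_filter.1 hp).2.two_le
    have h2' : (2:ℝ) ≤ (p:ℝ) := by exact_mod_cast h2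
    set u : ℝ := (p:ℝ)⁻¹ with hu
    have hu0 : 0 < u := by positivity
    have hu2 : u ≤ 1/2 := by
      rw [hu, inv_le_comm₀ (by positivity) (by norm_num)]
      linarith
    have hexp := Real.add_one_le_exp (2*u)
    rw [inv_eq_one_div, div_le_iff₀ (by linarith)]
    nlinarith

lemma aux_tail_bound (Q t : ℝ) (ht : 0 ≤ t) :
    ∑ S ∈ (primesUpTo Q).powerset.filter (fun S => ¬((S.card:ℝ) ≤ t)),
        ∏ p ∈ S, ((p:ℝ))⁻¹
      ≤ (40:ℝ) ^ (-t) * Real.exp (40 * ∑ p ∈ primesUpTo Q, ((p:ℝ))⁻¹) := by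
  have hstep : ∀ S ∈ (primesUpTo Q).powerset.filter (fun S => ¬((S.card:ℝ) ≤ t)),
      ∏ p ∈ S, ((p:ℝ))⁻¹ ≤ (40:ℝ) ^ (-t) * ∏ p ∈ S, (40 * ((p:ℝ))⁻¹) := by
    intro S hS
    have hc : t < (S.card : ℝ) := by
      have := (Finset.mem_filter.1 hS).2
      exact lt_of_not_ge this
    have hsplit : ∏ p ∈ S, (40 * ((p:ℝ))⁻¹) = 40^S.card * ∏ p ∈ S, ((p:ℝ))⁻¹ := by
      rw [Finset.prod_mul_distrib, Finset.prod_const]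
    rw [hsplit, ← mul_assoc]
    have hone : (1:ℝ) ≤ (40:ℝ) ^ (-t) * 40^S.card := by
      have h1 : (40:ℝ)^(S.card:ℕ) = (40:ℝ) ^ ((S.card:ℕ):ℝ) := (Real.rpow_natCast _ _).symm
      rw [h1, ← Real.rpow_add (by norm_num)]
      exact Real.one_le_rpow (by norm_num) (by linarith)
    have hprod : (0:ℝ) ≤ ∏ p ∈ S, ((p:ℝ))⁻¹ := Finset.prod_nonneg fun p _ => by positivity
    nlinarith
  calc ∑ S ∈ (primesUpTo Q).powerset.filter (fun S => ¬((S.card:ℝ) ≤ t)),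
        ∏ p ∈ S, ((p:ℝ))⁻¹
      ≤ ∑ S ∈ (primesUpTo Q).powerset.filter (fun S => ¬((S.card:ℝ) ≤ t)),
          (40:ℝ) ^ (-t) * ∏ p ∈ S, (40 * ((p:ℝ))⁻¹) := Finset.sum_le_sum hstep
    _ ≤ ∑ S ∈ (primesUpTo Q).powerset, (40:ℝ) ^ (-t) * ∏ p ∈ S, (40 * ((p:ℝ))⁻¹) := by
        apply Finset.sum_le_sum_of_subset_of_nonneg (Finset.filter_subset _ _)
        intro S _ _
        have h1 : (0:ℝ) ≤ (40:ℝ) ^ (-t) := Real.rpow_nonneg (by norm_num) _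
        have h2 : (0:ℝ) ≤ ∏ p ∈ S, (40 * ((p:ℝ))⁻¹) :=
          Finset.prod_nonneg fun p _ => by positivity
        positivity
    _ = (40:ℝ) ^ (-t) * ∑ S ∈ (primesUpTo Q).powerset, ∏ p ∈ S, (40 * ((p:ℝ))⁻¹) := by
        rw [Finset.mul_sum]
    _ = (40:ℝ) ^ (-t) * ∏ p ∈ primesUpTo Q, (40 * ((p:ℝ))⁻¹ + 1) := by
        rw [aux_powerset_sum]
    _ ≤ (40:ℝ) ^ (-t) * Real.exp (∑ p ∈ primesUpTo Q, 40 * ((p:ℝ))⁻¹) := by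
        apply mul_le_mul_of_nonneg_left _ (Real.rpow_nonneg (by norm_num) _)
        exact aux_prod_add_one_le_exp _ _ fun p _ => by positivity
    _ = (40:ℝ) ^ (-t) * Real.exp (40 * ∑ p ∈ primesUpTo Q, ((p:ℝ))⁻¹) := by
        rw [Finset.mul_sum]

end Aux

theorem stmt_18 :
    ∃ C : ℝ, ∀ᶠ X : ℝ in atTop,
      (∑ x ∈ Finset.Icc (1 : ℤ) ⌊Real.sqrt X⌋, |cramerQ (cramerLevel X) x - lamSharp X x|)
        ≤ C * Real.sqrt X / Real.log X ^ 8 ∧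
      (∑ x ∈ Finset.Icc (1 : ℤ) ⌊Real.sqrt X⌋, |lamSharp X x|)
        ≤ C * Real.sqrt X * Real.log X ^ 2 := by
  use 1
  have hloglog : Tendsto (fun X:ℝ => Real.log (Real.log X)) atTop atTop :=
    Real.tendsto_log_atTop.comp Real.tendsto_log_atTop
  filter_upwards [eventually_ge_atTop (3:ℝ),
    Real.tendsto_log_atTop.eventually (eventually_ge_atTop (118098:ℝ)),
    hloglog.eventually (eventually_ge_atTop (100:ℝ))] with X hX3 hlog hL
  have hX0 : (0:ℝ) < X := by linarith
  have hl0 : (0:ℝ) < Real.log X := by linarith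
  have hsqrt0 : (0:ℝ) ≤ Real.sqrt X := Real.sqrt_nonneg X
  have hlogsqrt : Real.log (Real.sqrt X) = Real.log X / 2 := Real.log_sqrt hX0.le
  have hCL : cramerLevel X = Real.exp (Real.log (Real.sqrt X) ^ ((1:ℝ)/10)) := rfl
  have hQlog : Real.log (cramerLevel X) = Real.log (Real.sqrt X) ^ ((1:ℝ)/10) := by
    rw [hCL, Real.log_exp]
  have hlhalf : (59049:ℝ) ≤ Real.log X / 2 := by linarith
  -- `q := log Q` is at least 3
  have h59049 : ((59049:ℝ)) ^ ((1:ℝ)/10) = 3 := by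
    have h3 : ((3:ℝ)) ^ ((10:ℝ)) = 59049 := by
      rw [show ((10:ℝ)) = ((10:ℕ):ℝ) by norm_num, Real.rpow_natCast]; norm_num
    rw [← h3, ← Real.rpow_mul (by norm_num : (0:ℝ) ≤ 3)]
    norm_num
  have hq3 : (3:ℝ) ≤ Real.log (Real.sqrt X) ^ ((1:ℝ)/10) := by
    rw [hlogsqrt, ← h59049]
    exact Real.rpow_le_rpow (by norm_num) hlhalf (by norm_num)
  have hQ16 : (16:ℝ) ≤ cramerLevel X := by
    rw [hCL]
    have h1 : Real.log 16 ≤ 3 := by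
      have h2 := Real.log_two_lt_d9
      rw [show (16:ℝ) = 2^4 by norm_num, Real.log_pow]
      push_cast; linarith
    calc (16:ℝ) = Real.exp (Real.log 16) := (Real.exp_log (by norm_num)).symm
      _ ≤ _ := Real.exp_le_exp.2 (by linarith)
  -- the prime reciprocal sum E
  have hE0 : (0:ℝ) ≤ ∑ p ∈ primesUpTo (cramerLevel X), ((p:ℝ))⁻¹ :=
    Finset.sum_nonneg fun p _ => by positivity
  have hmert := aux_mertens hQ16
  rw [hQlog] at hmert
  have hlogq : Real.log (Real.log (Real.sqrt X) ^ ((1:ℝ)/10))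
      ≤ Real.log (Real.log X) / 10 := by
    rw [Real.log_rpow (by rw [hlogsqrt]; linarith)]
    have h1 : Real.log (Real.log (Real.sqrt X)) ≤ Real.log (Real.log X) := by
      apply Real.log_le_log (by rw [hlogsqrt]; linarith)
      rw [hlogsqrt]; linarith
    linarith
  have hEL : ∑ p ∈ primesUpTo (cramerLevel X), ((p:ℝ))⁻¹ ≤ Real.log (Real.log X) / 2 := by
    have := hL
    linarith
  have hPle := aux_P_le (cramerLevel X)
  have hP0 := aux_P_nonneg (cramerLevel X)
  have hN0 : (0:ℤ) ≤ ⌊Real.sqrt X⌋ := Int.floor_nonneg.mpr hsqrt0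
  have hNr : ((⌊Real.sqrt X⌋:ℤ):ℝ) ≤ Real.sqrt X := Int.floor_le _
  have hL0 : (0:ℝ) ≤ Real.log (Real.log X) := by linarith
  -- abbreviations only as terms
  have hlog40 : (3:ℝ) ≤ Real.log 40 := by
    have he : Real.exp 3 ≤ 40 := by
      have h1 := Real.exp_one_lt_d9
      have h2 : Real.exp 3 = Real.exp 1 ^ (3:ℕ) := by
        rw [← Real.exp_nat_mul]; norm_num
      have h3 : (0:ℝ) < Real.exp 1 := Real.exp_pos 1
      calc Real.exp 3 = Real.exp 1 ^ (3:ℕ) := h2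
        _ ≤ (2.7182818286:ℝ) ^ (3:ℕ) := pow_le_pow_left₀ h3.le h1.le 3
        _ ≤ 40 := by norm_num
    calc (3:ℝ) = Real.log (Real.exp 3) := (Real.log_exp 3).symm
      _ ≤ Real.log 40 := Real.log_le_log (Real.exp_pos 3) he
  constructor
  · -- part (i)
    have hdiff : ∀ x:ℤ, cramerQ (cramerLevel X) x - lamSharp X x
        = (∏ p ∈ primesUpTo (cramerLevel X), ((1 : ℝ) - (p : ℝ)⁻¹)⁻¹) *
          ∑ S ∈ (primesUpTo (cramerLevel X)).powerset.filter
              (fun S => ¬((S.card : ℝ) ≤ 20 * Real.log (Real.log X))),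
            (-1:ℝ)^S.card * (if (∏ p ∈ S, (p:ℤ)) ∣ x then 1 else 0) := by
      intro x
      rw [cramerQ, lamSharp, aux_IE]
      rw [← Finset.sum_filter_add_sum_filter_not (primesUpTo (cramerLevel X)).powerset
        (fun S => (S.card : ℝ) ≤ 20 * Real.log (Real.log X))
        (fun S => (-1:ℝ)^S.card * (if (∏ p ∈ S, (p:ℤ)) ∣ x then 1 else 0))]
      ring
    calc ∑ x ∈ Finset.Icc (1 : ℤ) ⌊Real.sqrt X⌋, |cramerQ (cramerLevel X) x - lamSharp X x|
        = (∏ p ∈ primesUpTo (cramerLevel X), ((1 : ℝ) - (p : ℝ)⁻¹)⁻¹) *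
          ∑ x ∈ Finset.Icc (1 : ℤ) ⌊Real.sqrt X⌋,
            |∑ S ∈ (primesUpTo (cramerLevel X)).powerset.filter
                (fun S => ¬((S.card : ℝ) ≤ 20 * Real.log (Real.log X))),
              (-1:ℝ)^S.card * (if (∏ p ∈ S, (p:ℤ)) ∣ x then 1 else 0)| := by
          rw [Finset.mul_sum]
          apply Finset.sum_congr rfl
          intro x _
          rw [hdiff x, abs_mul, abs_of_nonneg hP0]
      _ ≤ (∏ p ∈ primesUpTo (cramerLevel X), ((1 : ℝ) - (p : ℝ)⁻¹)⁻¹) *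
          ∑ S ∈ (primesUpTo (cramerLevel X)).powerset.filter
              (fun S => ¬((S.card : ℝ) ≤ 20 * Real.log (Real.log X))),
            ((⌊Real.sqrt X⌋:ℤ):ℝ) * ∏ p ∈ S, ((p:ℝ))⁻¹ := by
          apply mul_le_mul_of_nonneg_left _ hP0
          exact aux_sum_abs_bound (cramerLevel X) _ hN0 _ (Finset.filter_subset _ _)
      _ = (∏ p ∈ primesUpTo (cramerLevel X), ((1 : ℝ) - (p : ℝ)⁻¹)⁻¹) *
          (((⌊Real.sqrt X⌋:ℤ):ℝ) *
          ∑ S ∈ (primesUpTo (cramerLevel X)).powerset.filter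
              (fun S => ¬((S.card : ℝ) ≤ 20 * Real.log (Real.log X))),
            ∏ p ∈ S, ((p:ℝ))⁻¹) := by
          simp only [Finset.mul_sum]
      _ ≤ Real.exp (2 * ∑ p ∈ primesUpTo (cramerLevel X), ((p:ℝ))⁻¹) *
          (Real.sqrt X * ((40:ℝ) ^ (-(20 * Real.log (Real.log X))) *
            Real.exp (40 * ∑ p ∈ primesUpTo (cramerLevel X), ((p:ℝ))⁻¹))) := by
          have htail := aux_tail_bound (cramerLevel X) (20 * Real.log (Real.log X))
            (by linarith)
          have hsum0 : (0:ℝ) ≤ ∑ S ∈ (primesUpTo (cramerLevel X)).powerset.filter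
              (fun S => ¬((S.card : ℝ) ≤ 20 * Real.log (Real.log X))),
              ∏ p ∈ S, ((p:ℝ))⁻¹ :=
            Finset.sum_nonneg fun S _ => Finset.prod_nonneg fun p _ => by positivity
          have hNr0 : (0:ℝ) ≤ ((⌊Real.sqrt X⌋:ℤ):ℝ) := by exact_mod_cast hN0
          apply mul_le_mul hPle _ (by positivity) (Real.exp_nonneg _)
          exact mul_le_mul hNr htail hsum0 hsqrt0
      _ ≤ Real.sqrt X / Real.log X ^ 8 := by
          have hrw : Real.exp (2 * ∑ p ∈ primesUpTo (cramerLevel X), ((p:ℝ))⁻¹) *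
              (Real.sqrt X * ((40:ℝ) ^ (-(20 * Real.log (Real.log X))) *
                Real.exp (40 * ∑ p ∈ primesUpTo (cramerLevel X), ((p:ℝ))⁻¹)))
              = Real.sqrt X * Real.exp
                  (42 * (∑ p ∈ primesUpTo (cramerLevel X), ((p:ℝ))⁻¹)
                    + Real.log 40 * (-(20 * Real.log (Real.log X)))) := by
            rw [Real.rpow_def_of_pos (by norm_num : (0:ℝ) < 40), ← Real.exp_add,
              mul_left_comm, ← Real.exp_add]
            congr 1
            ring
          rw [hrw]
          have hexple : Real.exp
              (42 * (∑ p ∈ primesUpTo (cramerLevel X), ((p:ℝ))⁻¹)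
                + Real.log 40 * (-(20 * Real.log (Real.log X))))
              ≤ Real.exp (-(8 * Real.log (Real.log X))) := by
            apply Real.exp_le_exp.2
            nlinarith [hEL, hlog40, hL0, hE0]
          have hpows : Real.exp (-(8 * Real.log (Real.log X))) = (Real.log X ^ 8)⁻¹ := by
            rw [Real.exp_neg, show (8:ℝ) * Real.log (Real.log X)
                = ((8:ℕ):ℝ) * Real.log (Real.log X) by norm_num,
              Real.exp_nat_mul, Real.exp_log hl0]
          rw [div_eq_mul_inv, ← hpows]
          exact mul_le_mul_of_nonneg_left hexple hsqrt0
      _ = 1 * Real.sqrt X / Real.log X ^ 8 := by rw [one_mul]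
  · -- part (ii)
    calc ∑ x ∈ Finset.Icc (1 : ℤ) ⌊Real.sqrt X⌋, |lamSharp X x|
        = (∏ p ∈ primesUpTo (cramerLevel X), ((1 : ℝ) - (p : ℝ)⁻¹)⁻¹) *
          ∑ x ∈ Finset.Icc (1 : ℤ) ⌊Real.sqrt X⌋,
            |∑ S ∈ (primesUpTo (cramerLevel X)).powerset.filter
                (fun S => (S.card : ℝ) ≤ 20 * Real.log (Real.log X)),
              (-1:ℝ)^S.card * (if (∏ p ∈ S, (p:ℤ)) ∣ x then 1 else 0)| := by
          rw [Finset.mul_sum]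
          apply Finset.sum_congr rfl
          intro x _
          rw [lamSharp, abs_mul, abs_of_nonneg hP0]
      _ ≤ (∏ p ∈ primesUpTo (cramerLevel X), ((1 : ℝ) - (p : ℝ)⁻¹)⁻¹) *
          ∑ S ∈ (primesUpTo (cramerLevel X)).powerset.filter
              (fun S => (S.card : ℝ) ≤ 20 * Real.log (Real.log X)),
            ((⌊Real.sqrt X⌋:ℤ):ℝ) * ∏ p ∈ S, ((p:ℝ))⁻¹ := by
          apply mul_le_mul_of_nonneg_left _ hP0
          exact aux_sum_abs_bound (cramerLevel X) _ hN0 _ (Finset.filter_subset _ _)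
      _ ≤ (∏ p ∈ primesUpTo (cramerLevel X), ((1 : ℝ) - (p : ℝ)⁻¹)⁻¹) *
          ∑ S ∈ (primesUpTo (cramerLevel X)).powerset,
            ((⌊Real.sqrt X⌋:ℤ):ℝ) * ∏ p ∈ S, ((p:ℝ))⁻¹ := by
          apply mul_le_mul_of_nonneg_left _ hP0
          apply Finset.sum_le_sum_of_subset_of_nonneg (Finset.filter_subset _ _)
          intro S _ _
          have hNr0 : (0:ℝ) ≤ ((⌊Real.sqrt X⌋:ℤ):ℝ) := by exact_mod_cast hN0
          have : (0:ℝ) ≤ ∏ p ∈ S, ((p:ℝ))⁻¹ :=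
            Finset.prod_nonneg fun p _ => by positivity
          positivity
      _ ≤ Real.exp (2 * ∑ p ∈ primesUpTo (cramerLevel X), ((p:ℝ))⁻¹) *
          (Real.sqrt X *
            Real.exp (∑ p ∈ primesUpTo (cramerLevel X), ((p:ℝ))⁻¹)) := by
          have h1 : ∑ S ∈ (primesUpTo (cramerLevel X)).powerset,
              ((⌊Real.sqrt X⌋:ℤ):ℝ) * ∏ p ∈ S, ((p:ℝ))⁻¹
              = ((⌊Real.sqrt X⌋:ℤ):ℝ) * ∏ p ∈ primesUpTo (cramerLevel X), (((p:ℝ))⁻¹ + 1) := by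
            rw [← Finset.mul_sum, aux_powerset_sum]
          rw [h1]
          have h2 : ((⌊Real.sqrt X⌋:ℤ):ℝ) * ∏ p ∈ primesUpTo (cramerLevel X), (((p:ℝ))⁻¹ + 1)
              ≤ Real.sqrt X * Real.exp (∑ p ∈ primesUpTo (cramerLevel X), ((p:ℝ))⁻¹) := by
            have h3 := aux_prod_add_one_le_exp (primesUpTo (cramerLevel X))
              (fun p => ((p:ℝ))⁻¹) (fun p _ => by positivity)
            have h4 : (0:ℝ) ≤ ∏ p ∈ primesUpTo (cramerLevel X), (((p:ℝ))⁻¹ + 1) :=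
              Finset.prod_nonneg fun p _ => by positivity
            have hNr0 : (0:ℝ) ≤ ((⌊Real.sqrt X⌋:ℤ):ℝ) := by exact_mod_cast hN0
            exact mul_le_mul hNr h3 h4 hsqrt0
          exact mul_le_mul hPle h2 (by positivity) (Real.exp_nonneg _)
      _ = Real.sqrt X * Real.exp (3 * ∑ p ∈ primesUpTo (cramerLevel X), ((p:ℝ))⁻¹) := by
          rw [mul_left_comm, ← Real.exp_add]
          congr 1
          ring
      _ ≤ Real.sqrt X * Real.log X ^ 2 := by
          have hexple : Real.exp (3 * ∑ p ∈ primesUpTo (cramerLevel X), ((p:ℝ))⁻¹)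
              ≤ Real.exp (2 * Real.log (Real.log X)) := by
            apply Real.exp_le_exp.2
            linarith
          have hpows : Real.exp (2 * Real.log (Real.log X)) = Real.log X ^ 2 := by
            rw [show (2:ℝ) * Real.log (Real.log X)
                = ((2:ℕ):ℝ) * Real.log (Real.log X) by norm_num,
              Real.exp_nat_mul, Real.exp_log hl0]
          rw [← hpows]
          exact mul_le_mul_of_nonneg_left hexple hsqrt0
      _ = 1 * Real.sqrt X * Real.log X ^ 2 := by rw [one_mul]
end
end
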